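/- arXiv:2002.07256 — 8 statements merged into one kernel-verified Lean document; each statement's English description precedes it below -/
import Mathlib

section
/- Let k ≥ 2 be a natural number and let S ⊆ ℕ be a k-automatic set such that the density of S exists, i.e., the limit lim_{N→∞} π_S(N)/N exists. Then this limit is a rational number. -/
open Filter

/-- A sequence `h : ℕ → Δ` is `k`-automatic if there is a DFAO (finite state set `Q`,
initial state `q₀`, transition function `δ`, output function `τ`) computing `h n` by
reading the base-`k` digits of `n` from the most significant digit to the least. -/
def IsAutomaticSeq {Δ : Type*} (k : ℕ) (h : ℕ → Δ) : Prop :=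
  ∃ (Q : Type) (_ : Fintype Q) (q₀ : Q) (δ : Q → ℕ → Q) (τ : Q → Δ),
    ∀ n : ℕ, h n = τ (((Nat.digits k n).reverse).foldl δ q₀)

/-- A set `S ⊆ ℕ` is `k`-automatic if its characteristic function is `k`-automatic. -/
def IsAutomaticSet (k : ℕ) (S : Set ℕ) : Prop :=
  IsAutomaticSeq k (S.indicator fun _ => (1 : ℕ))

/-- `piCount S N` is the number of elements of `S` that are less than `N`. -/
noncomputable def piCount (S : Set ℕ) (N : ℕ) : ℕ := (S ∩ Set.Iio N).ncard

/-!
Split every `m < k ^ n` into its base-`k` digits. A modified automaton, whose extra initial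
state absorbs leading zeros, turns the count `π_S(k ^ n)` into a sum of entries of `M ^ n`,
where `M q q'` counts the digits leading from `q'` to `q`; hence `π_S(k ^ n) / k ^ n = φ (A ^ n)`
for the rational matrix `A = M / k` and a linear functional `φ`. Such a sequence `x` satisfies
the linear recurrence `p(E) x = 0` given by the minimal polynomial `p` of `A`, where `E` is the
shift. Write `p = (X - 1) ^ m * r` with `r 1 ≠ 0`. The rational-valued sequence `z = r(E) x`
converges to `r 1 * L` and is killed by `(E - 1) ^ m`, so it is constant, and `L = z 0 / r 1`.
-/

open Polynomial Topology

def seqShift (R M : Type*) [CommSemiring R] [AddCommMonoid M] [Module R M] :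
    Module.End R (ℕ → M) :=
  LinearMap.funLeft R M (· + 1)

section Shift
variable {R M : Type*} [CommSemiring R] [AddCommMonoid M] [Module R M]

lemma seqShift_pow_apply (i : ℕ) (x : ℕ → M) (n : ℕ) :
    (seqShift R M ^ i) x n = x (n + i) := by
  induction i generalizing x with
  | zero => rfl
  | succ i ih => rw [pow_succ, Module.End.mul_apply, ih]; rfl

lemma aeval_seqShift_apply (p : R[X]) (x : ℕ → M) (n : ℕ) :
    aeval (seqShift R M) p x n = p.sum fun i a => a • x (n + i) := by
  simp [aeval_def, eval₂_eq_sum, Polynomial.sum, seqShift_pow_apply]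

lemma aeval_seqShift_linearMap_pow {A : Type*} [Semiring A] [Algebra R A] (φ : A →ₗ[R] M)
    (a : A) (p : R[X]) :
    aeval (seqShift R M) p (fun n => φ (a ^ n)) = fun n => φ (aeval a p * a ^ n) := by
  ext n
  rw [aeval_seqShift_apply, aeval_def, eval₂_eq_sum, Polynomial.sum, Polynomial.sum,
    Finset.sum_mul, map_sum]
  refine Finset.sum_congr rfl fun i _ => ?_
  rw [mul_assoc, ← pow_add, add_comm, ← Algebra.smul_def, map_smul]

end Shift

section Difference
variable {R M : Type*} [CommRing R] [AddCommGroup M] [Module R M]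

lemma aeval_seqShift_X_sub_one_apply (x : ℕ → M) (n : ℕ) :
    aeval (seqShift R M) (X - C 1 : R[X]) x n = x (n + 1) - x n := by
  simp [seqShift]

variable [TopologicalSpace M] [IsTopologicalAddGroup M] [T2Space M]

lemma eq_const_of_tendsto_of_aeval_X_sub_one_pow (m : ℕ) {z : ℕ → M} {c : M}
    (hz : aeval (seqShift R M) ((X - C 1 : R[X]) ^ m) z = 0) (hc : Tendsto z atTop (𝓝 c)) :
    z = fun _ => c := by
  induction m generalizing z c with
  | zero =>
    obtain rfl : z = 0 := by simpa using hz
    exact funext fun _ => tendsto_const_nhds_iff.mp hc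
  | succ m ih =>
    set d := aeval (seqShift R M) (X - C 1 : R[X]) z
    have hd : Tendsto d atTop (𝓝 0) := by
      have := (hc.comp (tendsto_add_atTop_nat 1)).sub hc
      rw [sub_self] at this
      exact this.congr fun n => (aeval_seqShift_X_sub_one_apply z n).symm
    have hd0 : d = fun _ => 0 := ih (by rwa [pow_succ, map_mul] at hz) hd
    have hstep (n : ℕ) : z (n + 1) = z n := by
      rw [← sub_eq_zero, ← aeval_seqShift_X_sub_one_apply (R := R)]
      exact congr_fun hd0 n
    have hconst : z = fun _ => z 0 := funext fun n => by
      induction n with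
      | zero => rfl
      | succ n ihn => rw [hstep, ihn]
    rw [hconst] at hc ⊢
    rw [tendsto_const_nhds_iff.mp hc]

end Difference

theorem exists_rat_eq_of_tendsto_of_aeval_eq_zero {y : ℕ → ℚ} {p : ℚ[X]} (hp : p ≠ 0)
    (hy : aeval (seqShift ℚ ℝ) p (fun n => (y n : ℝ)) = 0) {L : ℝ}
    (hL : Tendsto (fun n => (y n : ℝ)) atTop (𝓝 L)) : ∃ q : ℚ, L = q := by
  set m := p.rootMultiplicity 1
  set r := p /ₘ (X - C 1) ^ m
  have hfac : (X - C 1) ^ m * r = p := pow_mul_divByMonic_rootMultiplicity_eq p 1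
  have hr : r.eval 1 ≠ 0 := eval_divByMonic_pow_rootMultiplicity_ne_zero 1 hp
  set z := aeval (seqShift ℚ ℝ) r fun n => (y n : ℝ)
  have hz : aeval (seqShift ℚ ℝ) ((X - C 1 : ℚ[X]) ^ m) z = 0 := by
    rw [← hy, ← hfac, map_mul, Module.End.mul_apply]
  have hz_apply : z = fun n => r.sum fun i a => a • (y (n + i) : ℝ) :=
    funext (aeval_seqShift_apply r _)
  have hzL : Tendsto z atTop (𝓝 (r.eval 1 • L)) := by
    have hsum : r.eval 1 • L = r.sum fun _ a => a • L := by
      simp [eval_eq_sum, Polynomial.sum, Finset.sum_smul]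
    rw [hsum, hz_apply]
    exact tendsto_finsetSum _ fun i _ => (hL.comp (tendsto_add_atTop_nat i)).const_smul _
  have hz0 : r.eval 1 • L = ((r.sum fun i a => a * y i : ℚ) : ℝ) := by
    rw [← congr_fun (eq_const_of_tendsto_of_aeval_X_sub_one_pow m hz hzL) 0, hz_apply]
    simp [Polynomial.sum, Rat.smul_def]
  refine ⟨(r.sum fun i a => a * y i) / r.eval 1, ?_⟩
  rw [Rat.cast_div, ← hz0, Rat.smul_def]
  field_simp

theorem exists_rat_eq_of_tendsto_linearMap_pow {A : Type*} [Ring A] [Algebra ℚ A]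
    [FiniteDimensional ℚ A] (φ : A →ₗ[ℚ] ℚ) (a : A) {L : ℝ}
    (hL : Tendsto (fun n => (φ (a ^ n) : ℝ)) atTop (𝓝 L)) : ∃ q : ℚ, L = q := by
  have hrec := aeval_seqShift_linearMap_pow (Algebra.linearMap ℚ ℝ ∘ₗ φ) a (minpoly ℚ a)
  simp only [minpoly.aeval, zero_mul, map_zero] at hrec
  exact exists_rat_eq_of_tendsto_of_aeval_eq_zero (minpoly.monic (.of_finite ℚ a)).ne_zero
    hrec hL

theorem IsAutomaticSeq.exists_digit_step {Δ : Type*} {k : ℕ} {h : ℕ → Δ} (hk : 1 < k)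
    (hh : IsAutomaticSeq k h) :
    ∃ (Q : Type) (_ : Fintype Q) (δ : Q → ℕ → Q) (τ : Q → Δ) (F : ℕ → Q),
      (∀ m d, d < k → F (k * m + d) = δ (F m) d) ∧ ∀ n, h n = τ (F n) := by
  obtain ⟨Q, _, q₀, δ, τ, hτ⟩ := hh
  -- The new initial state `none` is fixed by the digit `0`, so leading zeros are ignored.
  let F : ℕ → Option Q := fun n =>
    if n = 0 then none else some ((Nat.digits k n).reverse.foldl δ q₀)
  refine ⟨Option Q, inferInstance,
    fun s d => if s = none ∧ d = 0 then none else some (δ (s.getD q₀) d),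
    fun s => τ (s.getD q₀), F, fun m d hd => ?_, fun n => ?_⟩
  · by_cases hmd : m = 0 ∧ d = 0
    · simp [F, hmd]
    have hdig : Nat.digits k (k * m + d) = d :: Nat.digits k m := by
      rw [add_comm]; exact Nat.digits_add k hk d m hd (by omega)
    rcases eq_or_ne m 0 with rfl | hm
    · simp_all [F]
    · simp [F, hdig, hm]
      omega
  · by_cases hn : n = 0 <;> simp [F, hτ, hn]

section DigitCount
open Finset

lemma sum_range_mul_eq_sum_sum {M : Type*} [AddCommMonoid M] (g : ℕ → M) (k N : ℕ) :
    ∑ m ∈ range (k * N), g m = ∑ m ∈ range N, ∑ d ∈ range k, g (k * m + d) := by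
  induction N with
  | zero => simp
  | succ N ih => rw [mul_add, mul_one, sum_range_add, ih, sum_range_succ]

variable {Q : Type*} [DecidableEq Q]

lemma piCount_eq_sum_card {S : Set ℕ} {F : ℕ → Q} {T : Finset Q}
    (hS : ∀ m, m ∈ S ↔ F m ∈ T) (N : ℕ) :
    piCount S N = ∑ q ∈ T, #{m ∈ range N | F m = q} := by
  have hcard : piCount S N = #{m ∈ range N | F m ∈ T} := by
    rw [piCount, ← Set.ncard_coe_finset]
    congr 1
    ext m
    simp [hS, and_comm]
  rw [hcard, card_eq_sum_card_fiberwise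
    fun m (hm : m ∈ {m ∈ range N | F m ∈ T}) => (mem_filter.mp hm).2]
  refine sum_congr rfl fun q hq => congr_arg card ?_
  ext m
  simp only [mem_filter]
  exact ⟨fun h => ⟨h.1.1, h.2⟩, fun h => ⟨⟨h.1, h.2 ▸ hq⟩, h.2⟩⟩

def digitCountMatrix (R : Type*) [Semiring R] (k : ℕ) (δ : Q → ℕ → Q) : Matrix Q Q R :=
  fun q q' => #{d ∈ range k | δ q' d = q}

theorem card_filter_range_pow_eq_digitCountMatrix_pow [Fintype Q] {R : Type*} [Semiring R]
    {k : ℕ} {δ : Q → ℕ → Q} {F : ℕ → Q}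
    (hF : ∀ m d, d < k → F (k * m + d) = δ (F m) d) (n : ℕ) (q : Q) :
    (#{m ∈ range (k ^ n) | F m = q} : R) = (digitCountMatrix R k δ ^ n) q (F 0) := by
  induction n generalizing q with
  | zero =>
    rcases eq_or_ne q (F 0) with rfl | h
    · simp [filter_singleton]
    · simp [filter_singleton, h, h.symm]
  | succ n ih =>
    have hsplit : #{m ∈ range (k ^ (n + 1)) | F m = q}
        = ∑ m ∈ range (k ^ n), #{d ∈ range k | δ (F m) d = q} := by
      rw [pow_succ', card_filter, sum_range_mul_eq_sum_sum]
      refine sum_congr rfl fun m _ => ?_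
      rw [card_filter]
      exact sum_congr rfl fun d hd => by rw [hF m d (mem_range.mp hd)]
    rw [hsplit, ← sum_fiberwise' _ F fun q' => #{d ∈ range k | δ q' d = q},
      pow_succ' (digitCountMatrix R k δ), Matrix.mul_apply]
    push_cast
    refine sum_congr rfl fun q' _ => ?_
    rw [sum_const, nsmul_eq_mul, ← ih]
    exact Nat.cast_comm _ _

end DigitCount

open Finset in
theorem density_automatic_set_rational
    (k : ℕ) (hk : 2 ≤ k) (S : Set ℕ) (hS : IsAutomaticSet k S)
    (L : ℝ) (hL : Filter.Tendsto (fun N : ℕ => (piCount S N : ℝ) / N) Filter.atTop (nhds L)) :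
    ∃ q : ℚ, L = (q : ℝ) := by
  classical
  obtain ⟨Q, _, δ, τ, F, hF, hτ⟩ := hS.exists_digit_step hk
  set T : Finset Q := {q | τ q = 1}
  have hmem (m : ℕ) : m ∈ S ↔ F m ∈ T := by
    by_cases hm : m ∈ S <;> simp [T, ← hτ, hm]
  set A := (k : ℚ)⁻¹ • digitCountMatrix ℚ k δ
  let φ : Matrix Q Q ℚ →ₗ[ℚ] ℚ := ∑ q ∈ T, Matrix.entryLinearMap ℚ ℚ q (F 0)
  have hcount (n : ℕ) : (piCount S (k ^ n) : ℝ) / (k ^ n : ℕ) = (φ (A ^ n) : ℝ) := by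
    have hentry (q : Q) : (A ^ n) q (F 0) = (#{m ∈ range (k ^ n) | F m = q} : ℚ) / k ^ n := by
      rw [_root_.smul_pow, Matrix.smul_apply, ← card_filter_range_pow_eq_digitCountMatrix_pow hF,
        smul_eq_mul, inv_pow, inv_mul_eq_div]
    have hφ : φ (A ^ n) = (piCount S (k ^ n) : ℚ) / (k ^ n : ℕ) := by
      simp [φ, hentry, piCount_eq_sum_card hmem, sum_div]
    rw [hφ, Rat.cast_div, Rat.cast_natCast, Rat.cast_natCast]
  exact exists_rat_eq_of_tendsto_linearMap_pow φ A
    ((hL.comp (tendsto_pow_atTop_atTop_of_one_lt hk)).congr hcount)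
end

section
/- Let k ≥ 2 be a natural number and let (α, β) be a pair of rational numbers satisfying either 0 < α ≤ β < 1 or (α, β) ∈ {(0,0), (1,1)}. Then there exists a k-automatic set S ⊆ ℕ whose lower density is α and whose upper density is β. -/
/-!
Write `t = k ^ j` and `M = k ^ m` with `0 < j < m`, and split every block `[M ^ L, M ^ (L + 1))` at
`t * M ^ L`. The set `S` takes the integers `n` with `n % q₁ < a₁` on the first part of each block
and those with `n % q₂ < a₂` on the second, so that it has local density `x = a₁ / q₁`, resp.
`y = a₂ / q₂`. With `x * (t - 1) = β * t - α` and `y * (M - t) = α * M - β * t`, the counting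
function of `S` follows, up to an error `O(log N)`, the piecewise linear function that equals
`α * N` at `N = M ^ L` and `β * N` at `N = t * M ^ L`, and whose ratio to `N` stays in `[α, β]`.
For `0 < α ≤ β < 1`, taking `t` and then `M / t` large puts `x` and `y` in `[0, 1]`.
Membership in `S` is decided by `n` modulo `q₁` and `q₂` and by the number of base-`k` digits of
`n` modulo `m`, so `S` is `k`-automatic.
-/

open Filter

open Topology

namespace IsAutomaticSeq

variable {k : ℕ} {Δ Δ' : Type*}

theorem comp {h : ℕ → Δ} (hh : IsAutomaticSeq k h) (g : Δ → Δ') : IsAutomaticSeq k (g ∘ h) := by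
  obtain ⟨Q, _, q₀, δ, τ, hτ⟩ := hh
  exact ⟨Q, ‹_›, q₀, δ, g ∘ τ, fun n => congrArg g (hτ n)⟩

theorem prodMk {h₁ : ℕ → Δ} {h₂ : ℕ → Δ'} (hh₁ : IsAutomaticSeq k h₁)
    (hh₂ : IsAutomaticSeq k h₂) : IsAutomaticSeq k fun n => (h₁ n, h₂ n) := by
  obtain ⟨Q₁, _, q₁, δ₁, τ₁, hτ₁⟩ := hh₁
  obtain ⟨Q₂, _, q₂, δ₂, τ₂, hτ₂⟩ := hh₂
  have foldl_prod : ∀ (l : List ℕ) (s : Q₁ × Q₂),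
      l.foldl (fun s d => (δ₁ s.1 d, δ₂ s.2 d)) s = (l.foldl δ₁ s.1, l.foldl δ₂ s.2) := by
    intro l
    induction l with
    | nil => simp
    | cons d l ih => exact fun s => ih _
  refine ⟨Q₁ × Q₂, inferInstance, (q₁, q₂), fun s d => (δ₁ s.1 d, δ₂ s.2 d),
    Prod.map τ₁ τ₂, fun n => ?_⟩
  rw [foldl_prod]
  exact Prod.ext (hτ₁ n) (hτ₂ n)

end IsAutomaticSeq

theorem isAutomaticSeq_natCast_zmod (k q : ℕ) [NeZero q] :
    IsAutomaticSeq k fun n : ℕ => (n : ZMod q) := by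
  refine ⟨ZMod q, inferInstance, 0, fun s d => d + (k : ZMod q) * s, id, fun n => ?_⟩
  rw [List.foldl_reverse, id, ← Nat.ofDigits_eq_foldr, ← Nat.coe_ofDigits, Nat.ofDigits_digits]

theorem isAutomaticSeq_length_digits_zmod (k m : ℕ) [NeZero m] :
    IsAutomaticSeq k fun n : ℕ => ((Nat.digits k n).length : ZMod m) := by
  have foldl_succ : ∀ (l : List ℕ) (s : ZMod m), l.foldl (fun s _ => s + 1) s = s + l.length := by
    intro l
    induction l with
    | nil => simp
    | cons d l ih => intro s; rw [List.foldl_cons, ih, List.length_cons]; push_cast; ring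
  refine ⟨ZMod m, inferInstance, 0, fun s _ => s + 1, id, fun n => ?_⟩
  rw [id, foldl_succ, List.length_reverse, zero_add]

/-- For `2 ≤ k` and `0 < j < m`, the number of base-`k` digits of `n` is congruent to one of
`1, …, j` modulo `m` exactly when `k ^ (m * L) ≤ n < k ^ (m * L + j)` for some `L`. -/
def blockSet (k m j q₁ a₁ q₂ a₂ : ℕ) : Set ℕ :=
  {n | if (Nat.digits k n).length % m ∈ Finset.Icc 1 j then n % q₁ < a₁ else n % q₂ < a₂}

theorem isAutomaticSet_blockSet (k : ℕ) {m j q₁ a₁ q₂ a₂ : ℕ} (hm : 0 < m) (hq₁ : 0 < q₁)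
    (hq₂ : 0 < q₂) : IsAutomaticSet k (blockSet k m j q₁ a₁ q₂ a₂) := by
  have : NeZero m := ⟨hm.ne'⟩
  have : NeZero q₁ := ⟨hq₁.ne'⟩
  have : NeZero q₂ := ⟨hq₂.ne'⟩
  have h := ((isAutomaticSeq_length_digits_zmod k m).prodMk
    ((isAutomaticSeq_natCast_zmod k q₁).prodMk (isAutomaticSeq_natCast_zmod k q₂))).comp
    fun s => if (if s.1.val ∈ Finset.Icc 1 j then s.2.1.val < a₁ else s.2.2.val < a₂)
      then 1 else 0
  rw [IsAutomaticSet]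
  convert h using 1
  funext n
  simp only [blockSet, Set.indicator, Set.mem_ofPred_eq, Function.comp, ZMod.val_natCast]
  congr

theorem mem_blockSet_iff_of_lt_pow {k m j q₁ a₁ q₂ a₂ L n : ℕ} (hk : 1 < k) (hjm : j < m)
    (h₁ : k ^ (m * L) ≤ n) (h₂ : n < k ^ (m * L + j)) :
    n ∈ blockSet k m j q₁ a₁ q₂ a₂ ↔ n % q₁ < a₁ := by
  have hlo := (Nat.lt_digits_length_iff hk n).2 h₁
  have hhi := (Nat.digits_length_le_iff hk n).2 h₂
  obtain ⟨r, hr⟩ : ∃ r, (Nat.digits k n).length = m * L + r :=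
    ⟨_, (Nat.add_sub_cancel' hlo.le).symm⟩
  have hmod : (Nat.digits k n).length % m = r := by
    rw [hr, Nat.mul_add_mod, Nat.mod_eq_of_lt (by omega)]
  simp only [blockSet, Set.mem_ofPred_eq, hmod, Finset.mem_Icc]
  rw [if_pos (by omega)]

theorem mem_blockSet_iff_of_pow_le {k m j q₁ a₁ q₂ a₂ L n : ℕ} (hk : 1 < k)
    (h₁ : k ^ (m * L + j) ≤ n) (h₂ : n < k ^ (m * L + m)) :
    n ∈ blockSet k m j q₁ a₁ q₂ a₂ ↔ n % q₂ < a₂ := by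
  have hlo := (Nat.lt_digits_length_iff hk n).2 h₁
  have hhi := (Nat.digits_length_le_iff hk n).2 h₂
  obtain ⟨r, hr⟩ : ∃ r, (Nat.digits k n).length = m * L + j + 1 + r :=
    ⟨_, (Nat.add_sub_cancel' hlo).symm⟩
  have hmod : (Nat.digits k n).length % m ∉ Finset.Icc 1 j := by
    rcases Nat.lt_or_ge (j + 1 + r) m with hlt | hge
    · rw [hr, add_assoc, add_assoc, Nat.mul_add_mod, Nat.mod_eq_of_lt (by omega), Finset.mem_Icc]
      omega
    · rw [show (Nat.digits k n).length = m * (L + 1) by rw [hr]; ring_nf; omega, Nat.mul_mod_right]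
      simp
  simp only [blockSet, Set.mem_ofPred_eq]
  rw [if_neg hmod]

namespace Nat

variable {p p' : ℕ → Prop} [DecidablePred p] [DecidablePred p']

theorem count_mul_add_of_periodic {q : ℕ} (hp : Function.Periodic p q) (s r : ℕ) :
    count p (q * s + r) = s * count p q + count p r := by
  have hshift : ∀ s k, p (q * s + k) ↔ p k := fun s k => by
    rw [add_comm, mul_comm]; exact Iff.of_eq (hp.nat_mul s k)
  have hmul : ∀ s, count p (q * s) = s * count p q := by
    intro s
    induction s with
    | zero => simp
    | succ s ih => rw [mul_add_one, count_add, ih, add_one_mul]; simp only [hshift]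
  rw [count_add, hmul]
  simp only [hshift]

theorem abs_count_sub_le_of_periodic {q : ℕ} (hp : Function.Periodic p q) (hq : 0 < q) (N : ℕ) :
    |(count p N : ℝ) - count p q / q * N| ≤ count p q := by
  have hqR : (0 : ℝ) < q := by exact_mod_cast hq
  have hsplit : (count p N : ℝ) - count p q / q * N
      = count p (N % q) - count p q * ((N % q : ℕ) / q) := by
    conv_lhs => rw [← Nat.div_add_mod N q, count_mul_add_of_periodic hp]
    push_cast
    field_simp
    ring
  have hr : (count p (N % q) : ℝ) ≤ count p q := by
    exact_mod_cast count_monotone p (Nat.mod_lt N hq).le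
  have hfrac : ((N % q : ℕ) : ℝ) / q ≤ 1 :=
    (div_le_one hqR).2 (by exact_mod_cast (Nat.mod_lt N hq).le)
  have hfrac₀ : 0 ≤ ((N % q : ℕ) : ℝ) / q := by positivity
  rw [hsplit, abs_le]
  constructor <;>
    nlinarith [(count p q).cast_nonneg (α := ℝ), (count p (N % q)).cast_nonneg (α := ℝ)]

theorem count_mod_lt_self {q a : ℕ} (ha : a ≤ q) : count (fun n => n % q < a) q = a := by
  rw [count_eq_card_filter_range]
  convert Finset.card_range a using 2
  ext n
  simp only [Finset.mem_filter, Finset.mem_range]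
  constructor
  · rintro ⟨hn, h⟩; rwa [Nat.mod_eq_of_lt hn] at h
  · intro h; exact ⟨h.trans_le ha, by rwa [Nat.mod_eq_of_lt (h.trans_le ha)]⟩

theorem cast_count_sub_count_congr {u w : ℕ} (huw : u ≤ w)
    (h : ∀ n, u ≤ n → n < w → (p n ↔ p' n)) :
    (count p w : ℝ) - count p u = count p' w - count p' u := by
  induction w, huw using Nat.le_induction with
  | base => simp
  | succ w huw ih =>
    rw [count_succ, count_succ, if_congr (h w huw w.lt_succ_self) rfl rfl]
    push_cast
    linarith [ih fun n h₁ h₂ => h n h₁ (h₂.trans w.lt_succ_self)]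

theorem abs_count_sub_count_sub_le {q a u w : ℕ} (hq : 0 < q) (ha : a ≤ q) (huw : u ≤ w)
    (h : ∀ n, u ≤ n → n < w → (p n ↔ n % q < a)) :
    |(count p w : ℝ) - count p u - a / q * ((w : ℝ) - u)| ≤ 2 * a := by
  have hper : Function.Periodic (fun n => n % q < a) q := fun n => by simp
  have hw := abs_count_sub_le_of_periodic hper hq w
  have hu := abs_count_sub_le_of_periodic hper hq u
  rw [count_mod_lt_self ha] at hw hu
  rw [cast_count_sub_count_congr huw h]
  calc _ = |((count (fun n => n % q < a) w : ℝ) - a / q * w)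
          - ((count (fun n => n % q < a) u : ℝ) - a / q * u)| := by ring_nf
    _ ≤ _ := (abs_sub _ _).trans (by linarith)

end Nat

theorem tendsto_natLog_div_atTop_nhds_zero (M : ℕ) :
    Tendsto (fun N : ℕ => (Nat.log M N : ℝ) / N) atTop (𝓝 0) := by
  have hlog : Tendsto (fun x : ℝ => Real.log x / x) atTop (𝓝 0) := by
    simpa using Real.isLittleO_log_id_atTop.tendsto_div_nhds_zero
  refine squeeze_zero (fun N => by positivity) (fun N => ?_)
    (by simpa using (hlog.comp tendsto_natCast_atTop_atTop).div_const (Real.log M))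
  rw [div_right_comm, Real.log_div_log]
  exact div_le_div_of_nonneg_right (Real.natLog_le_logb N M) (Nat.cast_nonneg N)

theorem liminf_eq_of_eventually_of_frequently {g e : ℕ → ℝ} {a : ℝ} (hg₀ : ∀ N, 0 ≤ g N)
    (hg₁ : ∀ N, g N ≤ 1) (he : Tendsto e atTop (𝓝 0)) (hlow : ∀ᶠ N in atTop, a - e N ≤ g N)
    (hfreq : ∃ᶠ N in atTop, g N ≤ a + e N) : liminf g atTop = a := by
  have hsmall : ∀ ε > 0, ∀ᶠ N in atTop, e N ≤ ε := fun ε hε => he.eventually (eventually_le_nhds hε)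
  refine le_antisymm (le_of_forall_pos_le_add fun ε hε => ?_)
    (le_of_forall_pos_le_add fun ε hε => ?_)
  · refine liminf_le_of_frequently_le ?_ (isBoundedUnder_of ⟨0, hg₀⟩)
    exact (hfreq.and_eventually (hsmall ε hε)).mono fun N h => by linarith [h.1, h.2]
  · have h := le_liminf_of_le (isCoboundedUnder_ge_of_le atTop hg₁)
      ((hlow.and (hsmall ε hε)).mono fun N h => show a - ε ≤ g N by linarith [h.1, h.2])
    linarith

theorem limsup_eq_of_eventually_of_frequently {g e : ℕ → ℝ} {a : ℝ} (hg₀ : ∀ N, 0 ≤ g N)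
    (hg₁ : ∀ N, g N ≤ 1) (he : Tendsto e atTop (𝓝 0)) (hup : ∀ᶠ N in atTop, g N ≤ a + e N)
    (hfreq : ∃ᶠ N in atTop, a - e N ≤ g N) : limsup g atTop = a := by
  have hsmall : ∀ ε > 0, ∀ᶠ N in atTop, e N ≤ ε := fun ε hε => he.eventually (eventually_le_nhds hε)
  refine le_antisymm (le_of_forall_pos_le_add fun ε hε => ?_)
    (le_of_forall_pos_le_add fun ε hε => ?_)
  · exact limsup_le_of_le (isCoboundedUnder_le_of_le atTop hg₀)
      ((hup.and (hsmall ε hε)).mono fun N h => by linarith [h.1, h.2])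
  · have h := le_limsup_of_frequently_le
      ((hfreq.and_eventually (hsmall ε hε)).mono fun N h => show a - ε ≤ g N by linarith [h.1, h.2])
      (isBoundedUnder_of ⟨1, hg₁⟩)
    linarith

noncomputable def blockError (F : ℕ → ℝ) (M : ℕ) (α C : ℝ) (N : ℕ) : ℝ :=
  (|F 1 - α| + 2 * C * (Nat.log M N + 1)) / N

theorem tendsto_blockError (F : ℕ → ℝ) (M : ℕ) (α C : ℝ) :
    Tendsto (blockError F M α C) atTop (𝓝 0) := by
  have h := (tendsto_const_div_atTop_nhds_zero_nat (|F 1 - α| + 2 * C)).add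
    ((tendsto_natLog_div_atTop_nhds_zero M).const_mul (2 * C))
  rw [mul_zero, add_zero] at h
  exact h.congr fun N => by simp only [blockError]; ring

structure HasBlockSlopes (F : ℕ → ℝ) (M t : ℕ) (x y C : ℝ) : Prop where
  first : ∀ L u w : ℕ, M ^ L ≤ u → u ≤ w → w ≤ t * M ^ L →
    |F w - F u - x * ((w : ℝ) - u)| ≤ C
  second : ∀ L u w : ℕ, t * M ^ L ≤ u → u ≤ w → w ≤ M ^ (L + 1) →
    |F w - F u - y * ((w : ℝ) - u)| ≤ C

namespace HasBlockSlopes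

variable {F : ℕ → ℝ} {M t : ℕ} {x y C α β : ℝ}

theorem const_nonneg (hF : HasBlockSlopes F M t x y C) (ht : 1 ≤ t) : 0 ≤ C :=
  (abs_nonneg _).trans (hF.first 0 1 1 (by simp) le_rfl (by simpa using ht))

theorem abs_sub_at_mul_pow (hF : HasBlockSlopes F M t x y C) (ht : 1 ≤ t)
    (hx : x * (t - 1) = β * t - α) (L : ℕ) :
    |F (t * M ^ L) - β * (t * M ^ L)| ≤ |F (M ^ L) - α * M ^ L| + C := by
  have h := hF.first L (M ^ L) (t * M ^ L) le_rfl (Nat.le_mul_of_pos_left _ ht) le_rfl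
  push_cast at h
  calc _ = |(F (M ^ L) - α * M ^ L) + (F (t * M ^ L) - F (M ^ L)
          - x * ((t : ℝ) * M ^ L - M ^ L))| := by congr 1; linear_combination (M : ℝ) ^ L * hx
    _ ≤ _ := (abs_add_le _ _).trans (by linarith)

theorem abs_sub_at_pow_succ (hF : HasBlockSlopes F M t x y C) (htM : t ≤ M)
    (hy : y * (M - t) = α * M - β * t) (L : ℕ) :
    |F (M ^ (L + 1)) - α * M ^ (L + 1)| ≤ |F (t * M ^ L) - β * (t * M ^ L)| + C := by
  have hle : t * M ^ L ≤ M ^ (L + 1) := by rw [pow_succ']; exact Nat.mul_le_mul_right _ htM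
  have h := hF.second L (t * M ^ L) (M ^ (L + 1)) le_rfl hle le_rfl
  push_cast at h
  calc _ = |(F (t * M ^ L) - β * (t * M ^ L)) + (F (M ^ (L + 1)) - F (t * M ^ L)
          - y * ((M : ℝ) ^ (L + 1) - t * M ^ L))| := by
        congr 1; rw [pow_succ]; linear_combination (M : ℝ) ^ L * hy
    _ ≤ _ := (abs_add_le _ _).trans (by linarith)

theorem abs_sub_at_pow (hF : HasBlockSlopes F M t x y C) (ht : 1 ≤ t) (htM : t ≤ M)
    (hx : x * (t - 1) = β * t - α) (hy : y * (M - t) = α * M - β * t) (L : ℕ) :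
    |F (M ^ L) - α * M ^ L| ≤ |F 1 - α| + 2 * C * L := by
  induction L with
  | zero => simp
  | succ L ih =>
    have h := (hF.abs_sub_at_pow_succ htM hy L).trans
      (add_le_add_left (hF.abs_sub_at_mul_pow ht hx L) C)
    push_cast
    linarith

theorem bounds_of_le_mul_pow (hF : HasBlockSlopes F M t x y C) (ht : 1 < t) (hαβ : α ≤ β)
    (hx : x * (t - 1) = β * t - α) {L N : ℕ} (h₁ : M ^ L ≤ N) (h₂ : N ≤ t * M ^ L) :
    α * N - (|F (M ^ L) - α * M ^ L| + C) ≤ F N ∧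
      F N ≤ β * N + (|F (M ^ L) - α * M ^ L| + C) := by
  have h := abs_le.1 (hF.first L (M ^ L) N le_rfl h₁ h₂)
  have e₁ := le_abs_self (F (M ^ L) - α * M ^ L)
  have e₂ := neg_abs_le (F (M ^ L) - α * M ^ L)
  have ht' : (1 : ℝ) < t := by exact_mod_cast ht
  have hxβ : β ≤ x := by nlinarith
  have h₁' : ((M ^ L : ℕ) : ℝ) ≤ N := by exact_mod_cast h₁
  have h₂' : (N : ℝ) ≤ t * M ^ L := by exact_mod_cast h₂
  push_cast at h h₁' ⊢
  constructor <;> nlinarith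

theorem bounds_of_mul_pow_le (hF : HasBlockSlopes F M t x y C) (htM : t < M) (hαβ : α ≤ β)
    (hy : y * (M - t) = α * M - β * t) {L N : ℕ} (h₁ : t * M ^ L ≤ N) (h₂ : N ≤ M ^ (L + 1)) :
    α * N - (|F (t * M ^ L) - β * (t * M ^ L)| + C) ≤ F N ∧
      F N ≤ β * N + (|F (t * M ^ L) - β * (t * M ^ L)| + C) := by
  have h := abs_le.1 (hF.second L (t * M ^ L) N le_rfl h₁ h₂)
  have e₁ := le_abs_self (F (t * M ^ L) - β * (t * M ^ L))
  have e₂ := neg_abs_le (F (t * M ^ L) - β * (t * M ^ L))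
  have htM' : (t : ℝ) < M := by exact_mod_cast htM
  have hyα : y ≤ α := by nlinarith
  have h₁' : ((t * M ^ L : ℕ) : ℝ) ≤ N := by exact_mod_cast h₁
  have h₂' : (N : ℝ) ≤ M ^ (L + 1) := by exact_mod_cast h₂
  push_cast at h h₁' ⊢
  rw [pow_succ] at h₂'
  have hX : (0 : ℝ) ≤ M ^ L := by positivity
  constructor <;> nlinarith

theorem bounds_of_pow_le_of_le_pow_succ (hF : HasBlockSlopes F M t x y C) (ht : 1 < t)
    (htM : t < M) (hαβ : α ≤ β) (hx : x * (t - 1) = β * t - α)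
    (hy : y * (M - t) = α * M - β * t) {L N : ℕ} (h₁ : M ^ L ≤ N) (h₂ : N ≤ M ^ (L + 1)) :
    α * N - (|F 1 - α| + 2 * C * (L + 1)) ≤ F N ∧
      F N ≤ β * N + (|F 1 - α| + 2 * C * (L + 1)) := by
  have hpow := hF.abs_sub_at_pow ht.le htM.le hx hy L
  have hmul := hF.abs_sub_at_mul_pow ht.le hx L
  have hC := hF.const_nonneg ht.le
  rcases le_total N (t * M ^ L) with hN | hN
  · have h := hF.bounds_of_le_mul_pow ht hαβ hx h₁ hN
    constructor <;> linarith [h.1, h.2]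
  · have h := hF.bounds_of_mul_pow_le htM hαβ hy hN h₂
    constructor <;> linarith [h.1, h.2]

theorem bounds_div (hF : HasBlockSlopes F M t x y C) (ht : 1 < t) (htM : t < M) (hαβ : α ≤ β)
    (hx : x * (t - 1) = β * t - α) (hy : y * (M - t) = α * M - β * t) {N : ℕ} (hN : 0 < N) :
    α - blockError F M α C N ≤ F N / N ∧ F N / N ≤ β + blockError F M α C N := by
  have hNR : (0 : ℝ) < N := by exact_mod_cast hN
  have h := hF.bounds_of_pow_le_of_le_pow_succ ht htM hαβ hx hy
    (Nat.pow_log_le_self M hN.ne') (Nat.lt_pow_succ_log_self (ht.trans htM) N).le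
  rw [blockError, le_div_iff₀ hNR, sub_mul, div_mul_cancel₀ _ hNR.ne', div_le_iff₀ hNR, add_mul,
    div_mul_cancel₀ _ hNR.ne']
  exact h

theorem div_pow_le_add_blockError (hF : HasBlockSlopes F M t x y C) (ht : 1 < t) (htM : t < M)
    (hx : x * (t - 1) = β * t - α) (hy : y * (M - t) = α * M - β * t) (L : ℕ) :
    F (M ^ L) / (M ^ L : ℕ) ≤ α + blockError F M α C (M ^ L) := by
  have h := (abs_le.1 (hF.abs_sub_at_pow ht.le htM.le hx hy L)).2
  have hX : (0 : ℝ) < M ^ L := pow_pos (by exact_mod_cast (by omega : 0 < M)) L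
  rw [blockError, Nat.log_pow (ht.trans htM)]
  push_cast
  rw [div_le_iff₀ hX, add_mul, div_mul_cancel₀ _ hX.ne']
  linarith [hF.const_nonneg ht.le]

theorem sub_blockError_le_div_mul_pow (hF : HasBlockSlopes F M t x y C) (ht : 1 < t)
    (htM : t < M) (hx : x * (t - 1) = β * t - α) (hy : y * (M - t) = α * M - β * t) (L : ℕ) :
    β - blockError F M α C (t * M ^ L) ≤ F (t * M ^ L) / (t * M ^ L : ℕ) := by
  have hlog : Nat.log M (t * M ^ L) = L := Nat.log_eq_of_pow_le_of_lt_pow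
    (Nat.le_mul_of_pos_left _ (by omega))
    (by rw [pow_succ']; exact Nat.mul_lt_mul_of_pos_right htM (pow_pos (by omega) L))
  have h := (abs_le.1 ((hF.abs_sub_at_mul_pow ht.le hx L).trans
    (add_le_add_left (hF.abs_sub_at_pow ht.le htM.le hx hy L) C))).1
  have hX : (0 : ℝ) < t * M ^ L := by
    have : 0 < t * M ^ L := Nat.mul_pos (by omega) (pow_pos (by omega) L)
    exact_mod_cast this
  rw [blockError, hlog]
  push_cast
  rw [le_div_iff₀ hX, sub_mul, div_mul_cancel₀ _ hX.ne']
  linarith [hF.const_nonneg ht.le]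

theorem liminf_limsup_div (hF : HasBlockSlopes F M t x y C) (hF₀ : ∀ N, 0 ≤ F N)
    (hFN : ∀ N, F N ≤ N) (ht : 1 < t) (htM : t < M) (hαβ : α ≤ β)
    (hx : x * (t - 1) = β * t - α) (hy : y * (M - t) = α * M - β * t) :
    liminf (fun N => F N / N) atTop = α ∧ limsup (fun N => F N / N) atTop = β := by
  have hg₀ : ∀ N, 0 ≤ F N / N := fun N => div_nonneg (hF₀ N) N.cast_nonneg
  have hg₁ : ∀ N, F N / N ≤ 1 := fun N => div_le_one_of_le₀ (hFN N) N.cast_nonneg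
  have hbounds := (eventually_gt_atTop 0).mono fun N hN => hF.bounds_div ht htM hαβ hx hy hN
  have hpow : Tendsto (fun L => M ^ L) atTop atTop :=
    tendsto_pow_atTop_atTop_of_one_lt (ht.trans htM)
  have hmul : Tendsto (fun L => t * M ^ L) atTop atTop :=
    tendsto_atTop_mono (fun L => Nat.le_mul_of_pos_left (M ^ L) (by omega)) hpow
  exact ⟨liminf_eq_of_eventually_of_frequently hg₀ hg₁ (tendsto_blockError F M α C)
      (hbounds.mono fun _ h => h.1) (hpow.frequently (Frequently.of_forall
        (hF.div_pow_le_add_blockError ht htM hx hy))),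
    limsup_eq_of_eventually_of_frequently hg₀ hg₁ (tendsto_blockError F M α C)
      (hbounds.mono fun _ h => h.2) (hmul.frequently (Frequently.of_forall
        (hF.sub_blockError_le_div_mul_pow ht htM hx hy)))⟩

end HasBlockSlopes

theorem piCount_eq_count (S : Set ℕ) [DecidablePred (· ∈ S)] (N : ℕ) :
    piCount S N = Nat.count (· ∈ S) N := by
  rw [piCount, Nat.count_eq_card_filter_range, ← Set.ncard_coe_finset]
  congr 1
  ext n
  simp [and_comm]

theorem liminf_limsup_piCount_blockSet {k m j q₁ a₁ q₂ a₂ : ℕ} (hk : 1 < k) (hj : 0 < j)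
    (hjm : j < m) (hq₁ : 0 < q₁) (ha₁ : a₁ ≤ q₁) (hq₂ : 0 < q₂) (ha₂ : a₂ ≤ q₂) {α β : ℝ}
    (hαβ : α ≤ β) (hx : (a₁ / q₁ : ℝ) * (k ^ j - 1) = β * k ^ j - α)
    (hy : (a₂ / q₂ : ℝ) * (k ^ m - k ^ j) = α * k ^ m - β * k ^ j) :
    liminf (fun N => (piCount (blockSet k m j q₁ a₁ q₂ a₂) N : ℝ) / N) atTop = α ∧
      limsup (fun N => (piCount (blockSet k m j q₁ a₁ q₂ a₂) N : ℝ) / N) atTop = β := by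
  classical
  set S := blockSet k m j q₁ a₁ q₂ a₂
  have hslopes : HasBlockSlopes (fun N => (Nat.count (· ∈ S) N : ℝ)) (k ^ m) (k ^ j)
      (a₁ / q₁) (a₂ / q₂) (2 * (a₁ + a₂)) := by
    constructor
    · intro L u w hu huw hw
      refine (Nat.abs_count_sub_count_sub_le hq₁ ha₁ huw fun n hn₁ hn₂ => ?_).trans (by linarith)
      rw [← pow_mul] at hu
      rw [← pow_mul, ← pow_add, add_comm] at hw
      exact mem_blockSet_iff_of_lt_pow hk hjm (hu.trans hn₁) (hn₂.trans_le hw)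
    · intro L u w hu huw hw
      refine (Nat.abs_count_sub_count_sub_le hq₂ ha₂ huw fun n hn₁ hn₂ => ?_).trans (by linarith)
      rw [← pow_mul, ← pow_add, add_comm] at hu
      rw [← pow_mul, mul_add_one] at hw
      exact mem_blockSet_iff_of_pow_le hk (hu.trans hn₁) (hn₂.trans_le hw)
  simp only [piCount_eq_count]
  exact hslopes.liminf_limsup_div (fun N => Nat.cast_nonneg _)
    (fun N => by exact_mod_cast Nat.count_le _) (Nat.one_lt_pow hj.ne' hk)
    (Nat.pow_lt_pow_right hk hjm) hαβ (by push_cast; exact hx) (by push_cast; exact hy)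

theorem Rat.exists_nat_div_eq_of_mem_Icc {x : ℚ} (h₀ : 0 ≤ x) (h₁ : x ≤ 1) :
    ∃ a q : ℕ, 0 < q ∧ a ≤ q ∧ x = a / q := by
  have hnum : ((x.num.toNat : ℕ) : ℚ) = x.num := by
    exact_mod_cast Int.toNat_of_nonneg (Rat.num_nonneg.2 h₀)
  have hx : x = (x.num.toNat : ℚ) / x.den := by rw [hnum, Rat.num_div_den]
  have hden : (0 : ℚ) < x.den := by exact_mod_cast x.den_pos
  refine ⟨x.num.toNat, x.den, x.den_pos, ?_, hx⟩
  rw [hx, div_le_one hden] at h₁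
  exact_mod_cast h₁

theorem exists_block_slopes {k : ℕ} (hk : 1 < k) {α β : ℚ} (h₀ : 0 ≤ α) (hαβ : α ≤ β)
    (h₁ : β ≤ 1) (hα : α = 0 → β = 0) (hβ : β = 1 → α = 1) :
    ∃ j m : ℕ, 0 < j ∧ j < m ∧ ∃ x y : ℚ, 0 ≤ x ∧ x ≤ 1 ∧ 0 ≤ y ∧ y ≤ 1 ∧
      x * (k ^ j - 1) = β * k ^ j - α ∧ y * (k ^ m - k ^ j) = α * k ^ m - β * k ^ j := by
  have hk' : (1 : ℚ) < k := by exact_mod_cast hk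
  obtain ⟨j, hj⟩ : ∃ j : ℕ, 1 - α ≤ (1 - β) * k ^ j := by
    rcases h₁.lt_or_eq with h₁ | rfl
    · obtain ⟨j, hj⟩ := pow_unbounded_of_one_lt ((1 - α) / (1 - β)) hk'
      exact ⟨j, by rw [div_lt_iff₀' (by linarith)] at hj; exact hj.le⟩
    · exact ⟨0, by simp [hβ rfl]⟩
  obtain ⟨i, hi⟩ : ∃ i : ℕ, β ≤ α * k ^ i := by
    rcases h₀.lt_or_eq with h₀ | h₀
    · obtain ⟨i, hi⟩ := pow_unbounded_of_one_lt (β / α) hk'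
      exact ⟨i, by rw [div_lt_iff₀' h₀] at hi; exact hi.le⟩
    · exact ⟨0, by simp [← h₀, hα h₀.symm]⟩
  set t : ℚ := k ^ (j + 1)
  set M : ℚ := k ^ (j + 1 + (i + 1))
  have hjt : (k : ℚ) ^ j < t := pow_lt_pow_right₀ hk' j.lt_succ_self
  have ht : 1 < t := one_lt_pow₀ hk' j.succ_ne_zero
  have hMt : k ^ i * t < M := by
    rw [show M = k ^ i * t * k by simp only [M, t]; ring]
    exact lt_mul_of_one_lt_right (by positivity) hk'
  have htM : t < M :=
    (le_mul_of_one_le_left (by positivity) (one_le_pow₀ hk'.le)).trans_lt hMt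
  refine ⟨j + 1, j + 1 + (i + 1), j.succ_pos, by omega, (β * t - α) / (t - 1),
    (α * M - β * t) / (M - t), ?_, ?_, ?_, ?_, ?_, ?_⟩
  · exact div_nonneg (by nlinarith) (by linarith)
  · rw [div_le_one (by linarith)]; nlinarith
  · exact div_nonneg (by nlinarith) (by linarith)
  · rw [div_le_one (by linarith)]; nlinarith
  · exact div_mul_cancel₀ _ (by linarith)
  · exact div_mul_cancel₀ _ (by linarith)

theorem exists_automatic_set_with_given_densities
    (k : ℕ) (hk : 2 ≤ k) (α β : ℚ)
    (hαβ : (0 < α ∧ α ≤ β ∧ β < 1) ∨ (α = 0 ∧ β = 0) ∨ (α = 1 ∧ β = 1)) :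
    ∃ S : Set ℕ, IsAutomaticSet k S ∧
      Filter.atTop.liminf (fun N : ℕ => (piCount S N : ℝ) / N) = (α : ℝ) ∧
      Filter.atTop.limsup (fun N : ℕ => (piCount S N : ℝ) / N) = (β : ℝ) := by
  obtain ⟨h₀, hle, h₁, hα, hβ⟩ :
      0 ≤ α ∧ α ≤ β ∧ β ≤ 1 ∧ (α = 0 → β = 0) ∧ (β = 1 → α = 1) := by
    rcases hαβ with ⟨h₀, hle, h₁⟩ | ⟨rfl, rfl⟩ | ⟨rfl, rfl⟩ <;> norm_num
    exact ⟨h₀.le, hle, h₁.le, fun h => absurd h h₀.ne', fun h => absurd h h₁.ne⟩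
  obtain ⟨j, m, hj, hjm, x, y, hx₀, hx₁, hy₀, hy₁, hx, hy⟩ :=
    exists_block_slopes hk h₀ hle h₁ hα hβ
  obtain ⟨a₁, q₁, hq₁, ha₁, rfl⟩ := Rat.exists_nat_div_eq_of_mem_Icc hx₀ hx₁
  obtain ⟨a₂, q₂, hq₂, ha₂, rfl⟩ := Rat.exists_nat_div_eq_of_mem_Icc hy₀ hy₁
  have hx' := congrArg (Rat.cast : ℚ → ℝ) hx
  have hy' := congrArg (Rat.cast : ℚ → ℝ) hy
  push_cast at hx' hy'
  exact ⟨blockSet k m j q₁ a₁ q₂ a₂, isAutomaticSet_blockSet k (hj.trans hjm) hq₁ hq₂,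
    liminf_limsup_piCount_blockSet hk hj hjm hq₁ ha₁ hq₂ ha₂ (by exact_mod_cast hle) hx' hy'⟩
end

section
/- Let k ≥ 2 be a natural number, let γ be a positive real number, let (s_n) and (s_n') be sequences of positive real numbers, let u', v', u, v be positive real numbers, and let b and c be positive integers. Suppose that (v'·k^{b+c} + u'·k^c + s_n')/(v·k^{b+c} + u·k^c + s_n) → γ as n → ∞, and that limsup_{n→∞} (v'·k^c + s_n')/(v·k^c + s_n) ≤ γ. Then limsup_{n→∞} (v'·k^{2b+c} + u'·(k^{b+c} + k^c) + s_n')/(v·k^{2b+c} + u·(k^{b+c} + k^c) + s_n) ≥ γ. -/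
/-!
Write `P = k ^ b`, `Q = k ^ c`. Multiplying numerator and denominator of the middle ratio by
`P + 1` exhibits it as the mediant `(E + P C) / (F + P D)` of the upper ratio `E / F` and the
lower ratio `C / D`, i.e. as a convex combination of them whose weights stay in a compact
subinterval of `(0, 1)` because `D ≤ F ≤ K D`. If `limsup E / F` were below `γ` while
`limsup C / D ≤ γ`, the middle ratio would eventually stay a fixed distance below `γ`.
-/

open Filter Topology

/-- In `ℝ`, `limsup` of a sequence that is not bounded above is junk, so both bounds on `p` and
`q` are recovered from the convergence of their average. -/
theorem le_limsup_of_tendsto_convexComb {p q w : ℕ → ℝ} {γ lam mu : ℝ}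
    (hlam : 0 < lam) (hmu : 0 < mu) (hw : ∀ n, lam ≤ w n) (hw' : ∀ n, w n ≤ 1 - mu)
    (hp : ∀ n, 0 ≤ p n) (hq : ∀ n, 0 ≤ q n)
    (hlim : Tendsto (fun n => w n * p n + (1 - w n) * q n) atTop (𝓝 γ))
    (hsup : limsup q atTop ≤ γ) :
    γ ≤ limsup p atTop := by
  have hr : ∀ᶠ n in atTop, w n * p n + (1 - w n) * q n ≤ γ + 1 :=
    hlim.eventually (eventually_le_nhds (by linarith))
  have hp_bdd : IsBoundedUnder (· ≤ ·) atTop p := by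
    refine ⟨(γ + 1) / lam, eventually_map.2 ?_⟩
    filter_upwards [hr] with n hn
    rw [le_div_iff₀ hlam]
    nlinarith [hp n, hq n, hw n, hw' n]
  have hq_bdd : IsBoundedUnder (· ≤ ·) atTop q := by
    refine ⟨(γ + 1) / mu, eventually_map.2 ?_⟩
    filter_upwards [hr] with n hn
    rw [le_div_iff₀ hmu]
    nlinarith [hp n, hq n, hw n, hw' n]
  by_contra! h
  obtain ⟨t, hpt, htγ⟩ := exists_between h
  set ε := lam * (γ - t) / 2 with hε
  have hε0 : 0 < ε := by positivity
  have hp_lt : ∀ᶠ n in atTop, p n < t := eventually_lt_of_limsup_lt hpt hp_bdd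
  have hq_lt : ∀ᶠ n in atTop, q n < γ + ε :=
    eventually_lt_of_limsup_lt (by linarith) hq_bdd
  -- the average is at most `γ + ε - w (γ + ε - t) ≤ γ + ε - lam (γ + ε - t) ≤ γ - ε`
  have hr_le : ∀ᶠ n in atTop, w n * p n + (1 - w n) * q n ≤ γ - ε := by
    filter_upwards [hp_lt, hq_lt] with n hpn hqn
    nlinarith [mul_le_mul_of_nonneg_left hpn.le (hlam.le.trans (hw n)),
      mul_le_mul_of_nonneg_left hqn.le (hmu.le.trans (by linarith [hw' n] : mu ≤ 1 - w n)),
      mul_le_mul_of_nonneg_right (hw n) (by linarith : 0 ≤ γ + ε - t)]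
  linarith [le_of_tendsto hlim hr_le]

theorem le_limsup_div_of_tendsto_mediant {a b c d : ℕ → ℝ} {γ m K : ℝ} (hm : 0 < m)
    (ha : ∀ n, 0 ≤ a n) (hc : ∀ n, 0 ≤ c n) (hd : ∀ n, 0 < d n)
    (hdb : ∀ n, d n ≤ b n) (hbd : ∀ n, b n ≤ K * d n)
    (hlim : Tendsto (fun n => (a n + m * c n) / (b n + m * d n)) atTop (𝓝 γ))
    (hsup : limsup (fun n => c n / d n) atTop ≤ γ) :
    γ ≤ limsup (fun n => a n / b n) atTop := by
  have hb n : 0 < b n := (hd n).trans_le (hdb n)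
  have hK : 1 ≤ K := by
    have := (hdb 0).trans (hbd 0)
    nlinarith [hd 0]
  have hbmd n : 0 < b n + m * d n := by nlinarith [hb n, hd n]
  refine le_limsup_of_tendsto_convexComb (w := fun n => b n / (b n + m * d n))
    (lam := 1 / (1 + m)) (mu := m / (K + m)) (by positivity) (by positivity) (fun n => ?_)
    (fun n => ?_) (fun n => div_nonneg (ha n) (hb n).le)
    (fun n => div_nonneg (hc n) (hd n).le) (hlim.congr fun n => ?_) hsup
  · rw [div_le_div_iff₀ (by positivity) (hbmd n)]
    nlinarith [hdb n]
  · have : 1 - m / (K + m) = K / (K + m) := by field_simp; ring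
    rw [this, div_le_div_iff₀ (hbmd n) (by positivity)]
    nlinarith [hbd n]
  · have := (hb n).ne'
    have := (hd n).ne'
    have := (hbmd n).ne'
    field_simp
    ring

theorem limsup_lemma_general
    (k : ℕ) (hk : 2 ≤ k) (γ : ℝ)
    (s s' : ℕ → ℝ) (hs : ∀ n, 0 < s n) (hs' : ∀ n, 0 < s' n)
    (u' v' u v : ℝ) (hu' : 0 < u') (hv' : 0 < v') (hu : 0 < u) (hv : 0 < v)
    (b c : ℕ)
    (hlim : Filter.Tendsto
      (fun n : ℕ => (v' * (k : ℝ) ^ (b + c) + u' * (k : ℝ) ^ c + s' n) /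
        (v * (k : ℝ) ^ (b + c) + u * (k : ℝ) ^ c + s n)) Filter.atTop (nhds γ))
    (hsup : Filter.atTop.limsup
      (fun n : ℕ => (v' * (k : ℝ) ^ c + s' n) / (v * (k : ℝ) ^ c + s n)) ≤ γ) :
    γ ≤ Filter.atTop.limsup
      (fun n : ℕ => (v' * (k : ℝ) ^ (2 * b + c) + u' * ((k : ℝ) ^ (b + c) + (k : ℝ) ^ c) + s' n) /
        (v * (k : ℝ) ^ (2 * b + c) + u * ((k : ℝ) ^ (b + c) + (k : ℝ) ^ c) + s n)) := by
  have hP : 1 ≤ (k : ℝ) ^ b := one_le_pow₀ (by exact_mod_cast (by omega : 1 ≤ k))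
  have hQ : 0 ≤ (k : ℝ) ^ c := by positivity
  rw [pow_add] at hlim
  rw [pow_add, pow_add, two_mul, pow_add]
  set P := (k : ℝ) ^ b
  set Q := (k : ℝ) ^ c
  refine le_limsup_div_of_tendsto_mediant (m := P) (K := P ^ 2 + 1 + u * (P + 1) / v)
    (by positivity) (fun n => ?_) (fun n => ?_) (fun n => ?_) (fun n => ?_) (fun n => ?_)
    (hlim.congr fun n => ?_) hsup
  · have := hs' n; positivity
  · have := hs' n; positivity
  · have := hs n; positivity
  · nlinarith [mul_nonneg (mul_nonneg hv.le hQ) (by nlinarith : 0 ≤ P * P - 1),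
      mul_nonneg hu.le (mul_nonneg (by linarith : (0 : ℝ) ≤ P + 1) hQ)]
  · have hsplit : u * (P + 1) / v * (v * Q + s n) = u * (P * Q + Q) + u * (P + 1) * s n / v := by
      field_simp
    have : 0 ≤ u * (P + 1) * s n / v := by have := hs n; positivity
    nlinarith [hs n, mul_nonneg (mul_nonneg hv.le hQ) (sq_nonneg P),
      mul_nonneg (sq_nonneg P) (hs n).le, mul_nonneg hv.le hQ]
  · rw [← mul_div_mul_left _ _ (by positivity : P + 1 ≠ 0)]
    congr 1 <;> ring

theorem limsup_lemma
    (k : ℕ) (hk : 2 ≤ k) (γ : ℝ) (hγ : 0 < γ)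
    (s s' : ℕ → ℝ) (hs : ∀ n, 0 < s n) (hs' : ∀ n, 0 < s' n)
    (u' v' u v : ℝ) (hu' : 0 < u') (hv' : 0 < v') (hu : 0 < u) (hv : 0 < v)
    (b c : ℕ) (hb : 0 < b) (hc : 0 < c)
    (hlim : Filter.Tendsto
      (fun n : ℕ => (v' * (k : ℝ) ^ (b + c) + u' * (k : ℝ) ^ c + s' n) /
        (v * (k : ℝ) ^ (b + c) + u * (k : ℝ) ^ c + s n)) Filter.atTop (nhds γ))
    (hsup : Filter.atTop.limsup
      (fun n : ℕ => (v' * (k : ℝ) ^ c + s' n) / (v * (k : ℝ) ^ c + s n)) ≤ γ) :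
    γ ≤ Filter.atTop.limsup
      (fun n : ℕ => (v' * (k : ℝ) ^ (2 * b + c) + u' * ((k : ℝ) ^ (b + c) + (k : ℝ) ^ c) + s' n) /
        (v * (k : ℝ) ^ (2 * b + c) + u * ((k : ℝ) ^ (b + c) + (k : ℝ) ^ c) + s n)) :=
  limsup_lemma_general k hk γ s s' hs hs' u' v' u v hu' hv' hu hv b c hlim hsup
end

section
/- Adopt the setup in the context, and suppose A, B, C ∈ Σ_k* are nonempty words whose lengths are multiples of a, such that A has no leading zeros, γ_j(ABC) = γ, and δ(1, A) = δ(1, AB) = δ(1, ABC). Then γ_j(AB²C) = γ, where AB²C denotes the concatenation of A, B, B, C. -/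
/-!
Put `u(L) = s₁(AB0^L) - s₁(A0^L)` and `D = [AB] - [A] > 0`. Since `δ(1, A) = δ(1, AB)`, every
suffix `t` gives `s([ABt]) = s([At]) + u(|t|)` and `[ABt] = [At] + D·k^|t|`: inserting `B` after
`A` always adds the same amount. The Perron hypothesis makes the normalised word sums
`∑_{|v|=m} f_i(v) / k^m` converge along residue classes mod `a` for every state `i` (averaging
over the `k` successor states contracts differences), so `u(L)/k^L → ℓ` along such classes.
With `t = Cw`, ratios near `γ` for `ABCw` while those for `ACw` stay below about `γ` force
`ℓ ≥ γD`. With `t = BCw`, the ratio for `ABBCw` is a mediant of the ratio for `ABCw` and of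
`u(|t|)/(D·k^|t|) ≈ ℓ/D ≥ γ`, so it is frequently close to `γ`; and `γ_j(U) ≤ γ` for every prefix.
-/

open Filter

/-- The finset of all words of length `n` over the alphabet `Σ_k = {0, …, k-1}`,
represented as lists of natural numbers (most significant digit first). -/
def kwords (k n : ℕ) : Finset (List ℕ) :=
  Finset.image (fun g : Fin n → Fin k => List.ofFn (fun i => (g i : ℕ))) Finset.univ

/-- `wordVal k w` is `[w]_k`, the natural number obtained by evaluating the word `w`
as a base-`k` numeral (most significant digit first), with `[ε]_k = 0`. -/
def wordVal (k : ℕ) (w : List ℕ) : ℕ := w.foldl (fun acc d => k * acc + d) 0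

/-- `sWord k g w = ∑_{v ≺ w, |v| = |w|} g v`, where `≺` is the lexicographic (equivalently,
numeric-value) strict order on words of equal length over `Σ_k`. -/
def sWord (k : ℕ) (g : List ℕ → ℚ) (w : List ℕ) : ℚ :=
  ∑ v ∈ (kwords k w.length).filter (fun v => wordVal k v < wordVal k w), g v

/-- The filter of words `w` over `Σ_k` with `|w| ≡ j (mod a)`, as `|w| → ∞`. -/
def wordFilter (k a j : ℕ) : Filter (List ℕ) :=
  (Filter.atTop.comap List.length) ⊓
    Filter.principal {w : List ℕ | (∀ x ∈ w, x < k) ∧ w.length % a = j}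

/-- `gammaJ k a j s u` is `γ_j(u)`: the limit superior of `s([uw]_k)/[uw]_k` over words `w`
over `Σ_k` with `|w| ≡ j (mod a)`, as `|w| → ∞`. -/
noncomputable def gammaJ (k a j : ℕ) (s : ℕ → ℚ) (u : List ℕ) : ℝ :=
  Filter.limsup
    (fun w : List ℕ => (s (wordVal k (u ++ w)) : ℝ) / (wordVal k (u ++ w)))
    (wordFilter k a j)

open Topology

theorem wordVal_eq_ofDigits (k : ℕ) (w : List ℕ) : wordVal k w = Nat.ofDigits k w.reverse := by
  induction w using List.reverseRecOn with
  | nil => rfl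
  | append_singleton w x ih =>
    rw [wordVal, List.foldl_append, ← wordVal, ih]
    simp [Nat.ofDigits_cons, add_comm]

theorem wordVal_append (k : ℕ) (p t : List ℕ) :
    wordVal k (p ++ t) = wordVal k p * k ^ t.length + wordVal k t := by
  simp only [wordVal_eq_ofDigits, List.reverse_append, Nat.ofDigits_append, List.length_reverse]
  ring

theorem wordVal_cons (k x : ℕ) (t : List ℕ) :
    wordVal k (x :: t) = x * k ^ t.length + wordVal k t := by
  simpa [wordVal] using wordVal_append k [x] t

@[simp]
theorem wordVal_replicate_zero (k m : ℕ) : wordVal k (List.replicate m 0) = 0 := by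
  simp [wordVal_eq_ofDigits]

theorem wordVal_lt_pow {k : ℕ} (hk : 1 < k) {w : List ℕ} (hw : ∀ x ∈ w, x < k) :
    wordVal k w < k ^ w.length := by
  simpa [wordVal_eq_ofDigits] using
    Nat.ofDigits_lt_base_pow_length hk (fun x hx => hw x (List.mem_reverse.mp hx))

theorem wordVal_append_lt {k : ℕ} (hk : 1 < k) (p : List ℕ) {t : List ℕ}
    (ht : ∀ x ∈ t, x < k) : wordVal k (p ++ t) < (wordVal k p + 1) * k ^ t.length := by
  rw [wordVal_append]
  linarith [wordVal_lt_pow hk ht]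

theorem pos_wordVal {k : ℕ} (hk : 0 < k) {w : List ℕ} (hw : w ≠ []) (hlead : w.head? ≠ some 0) :
    0 < wordVal k w := by
  obtain ⟨x, t, rfl⟩ := List.exists_cons_of_ne_nil hw
  have hx : 0 < x := Nat.pos_of_ne_zero (by simpa using hlead)
  rw [wordVal_cons]
  positivity

theorem pos_wordVal_append {k : ℕ} (hk : 0 < k) {p : List ℕ} (hp : 0 < wordVal k p)
    (t : List ℕ) : 0 < wordVal k (p ++ t) := by
  rw [wordVal_append]
  exact Nat.add_pos_left (by positivity) _

theorem wordVal_append_eq_add {k : ℕ} {P Q : List ℕ} (h : wordVal k P ≤ wordVal k Q)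
    (t : List ℕ) :
    wordVal k (Q ++ t) = wordVal k (P ++ t) + (wordVal k Q - wordVal k P) * k ^ t.length := by
  rw [wordVal_append, wordVal_append, Nat.sub_mul]
  have := Nat.mul_le_mul_right (k ^ t.length) h
  omega

theorem wordVal_lt_wordVal_append {k : ℕ} (hk : 1 < k) {A B : List ℕ} (hA : 0 < wordVal k A)
    (hB : B ≠ []) : wordVal k A < wordVal k (A ++ B) := by
  have hkB : k ≤ k ^ B.length := Nat.le_self_pow (by simpa using hB) k
  rw [wordVal_append]
  nlinarith

theorem digits_wordVal_reverse {k : ℕ} (hk : 1 < k) {w : List ℕ} (hw : w ≠ [])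
    (hdig : ∀ x ∈ w, x < k) (hlead : w.head? ≠ some 0) :
    (Nat.digits k (wordVal k w)).reverse = w := by
  rw [wordVal_eq_ofDigits, Nat.digits_ofDigits k hk _ (by simpa using hdig), List.reverse_reverse]
  intro _
  rw [List.getLast_reverse]
  intro h0
  exact hlead (by rw [List.head?_eq_some_head hw, h0])

theorem digits_pow_reverse {k : ℕ} (hk : 1 < k) (M : ℕ) :
    (Nat.digits k (k ^ M)).reverse = 1 :: List.replicate M 0 := by
  have hval : wordVal k (1 :: List.replicate M 0) = k ^ M := by simp [wordVal_cons]
  rw [← hval, digits_wordVal_reverse hk (by simp) (by simp [hk, hk.pos]) (by simp)]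

theorem mem_kwords {k n : ℕ} {v : List ℕ} :
    v ∈ kwords k n ↔ v.length = n ∧ ∀ x ∈ v, x < k := by
  constructor
  · intro h
    obtain ⟨g, -, rfl⟩ := Finset.mem_image.mp h
    exact ⟨by simp, fun x hx => by obtain ⟨i, rfl⟩ := List.mem_ofFn.mp hx; exact (g i).isLt⟩
  · rintro ⟨rfl, hdig⟩
    exact Finset.mem_image.mpr
      ⟨fun i => ⟨v.get i, hdig _ (List.get_mem v i)⟩, Finset.mem_univ _,
        by simp [List.ofFn_getElem]⟩

theorem kwords_succ (k n : ℕ) :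
    kwords k (n + 1) = (Finset.range k ×ˢ kwords k n).image (fun p => p.1 :: p.2) := by
  ext v
  rw [mem_kwords, Finset.mem_image]
  constructor
  · rintro ⟨hlen, hdig⟩
    obtain ⟨x, t, rfl⟩ := List.exists_cons_of_length_eq_add_one hlen
    refine ⟨(x, t), ?_, rfl⟩
    simp_all [mem_kwords]
  · rintro ⟨⟨x, t⟩, hp, rfl⟩
    simp_all [mem_kwords]

theorem sum_kwords_succ (k n : ℕ) (g : List ℕ → ℚ) :
    ∑ v ∈ kwords k (n + 1), g v = ∑ y ∈ Finset.range k, ∑ v ∈ kwords k n, g (y :: v) := by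
  rw [kwords_succ, Finset.sum_image (by simp), Finset.sum_product]

theorem wordVal_cons_lt_cons_iff {k : ℕ} (hk : 1 < k) {x y : ℕ} {v t : List ℕ}
    (hv : ∀ z ∈ v, z < k) (ht : ∀ z ∈ t, z < k) (hlen : v.length = t.length) :
    wordVal k (y :: v) < wordVal k (x :: t) ↔ y < x ∨ y = x ∧ wordVal k v < wordVal k t := by
  have hv' := wordVal_lt_pow hk hv
  have ht' := wordVal_lt_pow hk ht
  rw [wordVal_cons, wordVal_cons, hlen]
  rw [hlen] at hv'
  set K := k ^ t.length
  rcases lt_trichotomy y x with hyx | rfl | hxy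
  · have : (y + 1) * K ≤ x * K := Nat.mul_le_mul_right K hyx
    exact iff_of_true (by nlinarith) (Or.inl hyx)
  · simp
  · have : (x + 1) * K ≤ y * K := Nat.mul_le_mul_right K hxy
    exact iff_of_false (by nlinarith) (by omega)

@[simp]
theorem sWord_replicate_zero (k : ℕ) (g : List ℕ → ℚ) (m : ℕ) :
    sWord k g (List.replicate m 0) = 0 := by
  simp [sWord]

def wordsSum (k : ℕ) (g : List ℕ → ℚ) (m : ℕ) : ℚ :=
  ∑ v ∈ kwords k m, g v

theorem le_mul_pow_of_le_mul_add_pow {E : ℕ → ℝ} {q c η ρ : ℝ} (hq : 0 ≤ q) (hc : 0 ≤ c)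
    (hη : 0 ≤ η) (hqρ : q < ρ) (hηρ : η ≤ ρ) (hE0 : 0 ≤ E 0)
    (hrec : ∀ m, E (m + 1) ≤ q * E m + c * η ^ m) (m : ℕ) :
    E m ≤ (E 0 + c / (ρ - q)) * ρ ^ m := by
  have hρq : 0 < ρ - q := by linarith
  have hK : c ≤ (E 0 + c / (ρ - q)) * (ρ - q) := by
    rw [add_mul, div_mul_cancel₀ c hρq.ne']
    nlinarith
  induction m with
  | zero => simpa using div_nonneg hc hρq.le
  | succ m ih =>
    have hρm : 0 ≤ ρ ^ m := pow_nonneg (hq.trans hqρ.le) m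
    calc E (m + 1) ≤ q * ((E 0 + c / (ρ - q)) * ρ ^ m) + c * ρ ^ m := by
          have := pow_le_pow_left₀ hη hηρ m
          nlinarith [hrec m, mul_le_mul_of_nonneg_left ih hq]
      _ ≤ (E 0 + c / (ρ - q)) * ρ ^ (m + 1) := by rw [pow_succ]; nlinarith

theorem sum_range_abs_le_of_abs_zero_le {k : ℕ} (hk : 0 < k) {u : ℕ → ℝ} {E b : ℝ}
    (h0 : |u 0| ≤ b) (hE : ∀ x, |u x| ≤ E) :
    ∑ x ∈ Finset.range k, |u x| ≤ b + (k - 1) * E := by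
  obtain ⟨n, rfl⟩ := Nat.exists_eq_add_one_of_ne_zero hk.ne'
  rw [Finset.sum_range_succ', add_comm]
  have := Finset.sum_le_sum fun x (_ : x ∈ Finset.range n) => hE (x + 1)
  simp only [Finset.sum_const, Finset.card_range, nsmul_eq_mul] at this
  push_cast
  linarith

theorem exists_abs_le_geometric_of_average {ι : Type*} [Fintype ι] [Nonempty ι] {k : ℕ}
    (hk : 0 < k) {h : ι → ℕ → ℝ} {σ : ι → ℕ → ι}
    (hh : ∀ i m, h i (m + 1) = (∑ x ∈ Finset.range k, h (σ i x) m) / k)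
    {C η : ℝ} (hC : 0 ≤ C) (hη0 : 0 ≤ η) (hη1 : η < 1)
    (h0 : ∀ i m, |h (σ i 0) m| ≤ C * η ^ m) :
    ∃ K ρ : ℝ, 0 ≤ ρ ∧ ρ < 1 ∧ ∀ i m, |h i m| ≤ K * ρ ^ m := by
  -- Only the successor `σ i 0` is controlled directly; bounding the other `k - 1` by the
  -- supremum `E` makes `E` contract by the factor `(k - 1) / k` up to a geometric error.
  set E : ℕ → ℝ := fun m => Finset.univ.sup' Finset.univ_nonempty fun i => |h i m|
  have hE : ∀ i m, |h i m| ≤ E m := fun i m => Finset.le_sup' (fun i => |h i m|) (Finset.mem_univ i)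
  have hk' : (0 : ℝ) < k := by exact_mod_cast hk
  set q : ℝ := (k - 1) / k with hq
  have hq0 : 0 ≤ q := div_nonneg (by linarith [(Nat.one_le_cast (α := ℝ)).mpr hk]) hk'.le
  have hq1 : q < 1 := (div_lt_one hk').mpr (by linarith)
  have hrec : ∀ m, E (m + 1) ≤ q * E m + C / k * η ^ m := by
    intro m
    refine Finset.sup'_le _ _ fun i _ => ?_
    have hsum := sum_range_abs_le_of_abs_zero_le hk (u := fun x => h (σ i x) m) (h0 i m)
      (fun x => hE _ m)
    rw [hh, abs_div, abs_of_pos hk', div_le_iff₀ hk']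
    calc |∑ x ∈ Finset.range k, h (σ i x) m| ≤ C * η ^ m + (k - 1) * E m :=
          (Finset.abs_sum_le_sum_abs _ _).trans hsum
      _ = (q * E m + C / k * η ^ m) * k := by rw [hq]; field_simp; ring
  set ρ : ℝ := (max q η + 1) / 2 with hρ
  have hmax : max q η < 1 := max_lt hq1 hη1
  refine ⟨E 0 + C / k / (ρ - q), ρ, by positivity, by linarith [hρ], fun i m => (hE i m).trans ?_⟩
  exact le_mul_pow_of_le_mul_add_pow hq0 (by positivity) hη0 (by linarith [le_max_left q η, hρ])
    (by linarith [le_max_right q η, hρ]) ((abs_nonneg _).trans (hE (Classical.arbitrary ι) 0))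
    hrec m

theorem exists_tendsto_of_average {ι : Type*} [Fintype ι] [Nonempty ι] {k a : ℕ}
    (hk : 0 < k) (ha : 0 < a) {g : ι → ℕ → ℝ} {σ : ι → ℕ → ι}
    (hg : ∀ i m, g i (m + 1) = (∑ x ∈ Finset.range k, g (σ i x) m) / k)
    {C η : ℝ} (hC : 0 ≤ C) (hη0 : 0 ≤ η) (hη1 : η < 1)
    (h0 : ∀ i m, |g (σ i 0) (m + a) - g (σ i 0) m| ≤ C * η ^ m) (i : ι) (r : ℕ) :
    ∃ ℓ, Tendsto (fun n => g i (r + n * a)) atTop (𝓝 ℓ) := by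
  obtain ⟨K, ρ, hρ0, hρ1, hK⟩ := exists_abs_le_geometric_of_average hk
    (h := fun i m => g i (m + a) - g i m) (σ := σ)
    (fun i m => by rw [add_right_comm, hg, hg, Finset.sum_sub_distrib, sub_div])
    hC hη0 hη1 h0
  refine cauchySeq_tendsto_of_complete <| cauchySeq_of_le_geometric (ρ ^ a) (K * ρ ^ r)
    (pow_lt_one₀ hρ0 hρ1 ha.ne') fun n => ?_
  rw [Real.dist_eq, abs_sub_comm, add_one_mul, ← add_assoc]
  calc |g i (r + n * a + a) - g i (r + n * a)| ≤ K * ρ ^ (r + n * a) := hK i _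
    _ = K * ρ ^ r * (ρ ^ a) ^ n := by ring

section Automaton

variable {k d : ℕ} {f : Fin d → List ℕ → ℚ} {δ : Fin d → ℕ → Fin d}
  (hδ : ∀ i : Fin d, ∀ x < k, ∀ w, f i (x :: w) = f (δ i x) w)
include hδ

theorem wordsSum_succ (i : Fin d) (m : ℕ) :
    wordsSum k (f i) (m + 1) = ∑ x ∈ Finset.range k, wordsSum k (f (δ i x)) m := by
  rw [wordsSum, sum_kwords_succ]
  refine Finset.sum_congr rfl fun x hx => Finset.sum_congr rfl fun v _ => ?_
  exact hδ i x (Finset.mem_range.mp hx) v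

theorem sWord_cons (hk : 1 < k) (i : Fin d) {x : ℕ} (hx : x < k) {t : List ℕ}
    (ht : ∀ z ∈ t, z < k) :
    sWord k (f i) (x :: t) =
      ∑ y ∈ Finset.range x, wordsSum k (f (δ i y)) t.length + sWord k (f (δ i x)) t := by
  have hsplit : ∀ y ∈ Finset.range k, ∀ v ∈ kwords k t.length,
      (if wordVal k (y :: v) < wordVal k (x :: t) then f i (y :: v) else 0) =
        (if y < x then f (δ i y) v else 0) +
          if y = x then (if wordVal k v < wordVal k t then f (δ i x) v else 0) else 0 := by
    intro y hy v hv
    obtain ⟨hlen, hvd⟩ := mem_kwords.mp hv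
    simp only [wordVal_cons_lt_cons_iff hk hvd ht hlen, hδ i y (Finset.mem_range.mp hy)]
    by_cases hyx : y < x
    · simp [hyx, hyx.ne]
    · by_cases h : y = x <;> simp [hyx, h]
  have hrange : (Finset.range k).filter (· < x) = Finset.range x := by
    ext y; simp only [Finset.mem_filter, Finset.mem_range]; omega
  simp only [sWord, Finset.sum_filter, List.length_cons, sum_kwords_succ]
  rw [Finset.sum_congr rfl fun y hy => Finset.sum_congr rfl (hsplit y hy)]
  simp only [Finset.sum_add_distrib, Finset.sum_ite_irrel, Finset.sum_const_zero,
    Finset.sum_ite_eq', Finset.mem_range, hx, if_true]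
  rw [← Finset.sum_filter, hrange]
  rfl

theorem sWord_cons_replicate_zero (hk : 1 < k) (i : Fin d) {x : ℕ} (hx : x < k) (m : ℕ) :
    sWord k (f i) (x :: List.replicate m 0) = ∑ y ∈ Finset.range x, wordsSum k (f (δ i y)) m := by
  rw [sWord_cons hδ hk i hx (by simp +contextual [hk.pos]), sWord_replicate_zero,
    List.length_replicate, add_zero]

theorem sWord_append (hk : 1 < k) (i : Fin d) {p t : List ℕ} (hp : ∀ z ∈ p, z < k)
    (ht : ∀ z ∈ t, z < k) :
    sWord k (f i) (p ++ t) =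
      sWord k (f i) (p ++ List.replicate t.length 0) + sWord k (f (p.foldl δ i)) t := by
  induction p generalizing i with
  | nil => simp
  | cons x p ih =>
    obtain ⟨hx, hp⟩ := List.forall_mem_cons.mp hp
    have hz : ∀ z ∈ List.replicate t.length 0, z < k := by simp +contextual [hk.pos]
    rw [List.cons_append, List.cons_append,
      sWord_cons hδ hk i hx (List.forall_mem_append.mpr ⟨hp, ht⟩),
      sWord_cons hδ hk i hx (List.forall_mem_append.mpr ⟨hp, hz⟩), ih (δ i x) hp, List.foldl_cons]
    simp only [List.length_append, List.length_replicate]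
    ring

theorem sWord_digits_wordVal (hk : 1 < k) (i : Fin d) {U t : List ℕ}
    (hU : U ≠ []) (hUd : ∀ z ∈ U, z < k) (hlead : U.head? ≠ some 0) (ht : ∀ z ∈ t, z < k) :
    sWord k (f i) (Nat.digits k (wordVal k (U ++ t))).reverse =
      sWord k (f i) (U ++ List.replicate t.length 0) + sWord k (f (U.foldl δ i)) t := by
  rw [digits_wordVal_reverse hk (by simp [hU]) (List.forall_mem_append.mpr ⟨hUd, ht⟩)
    (by obtain ⟨x, U, rfl⟩ := List.exists_cons_of_ne_nil hU; simpa using hlead)]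
  exact sWord_append hδ hk i hUd ht

theorem abs_wordsSum_div_pow_sub_le (hk : 1 < k) {a : ℕ} (ha : 0 < a)
    {β C₀ : ℝ} (hβ : 0 ≤ β) (hC₀ : 0 ≤ C₀) (c : Fin d → ℕ → ℚ)
    (hc : ∀ i : Fin d, ∀ j < a, ∀ n : ℕ,
      |(sWord k (f i) ((Nat.digits k (k ^ (a * n + j))).reverse) : ℝ) -
          (c i j : ℝ) * (k : ℝ) ^ (a * n + j)| ≤ C₀ * β ^ (a * n))
    (i : Fin d) (m : ℕ) :
    |(wordsSum k (f (δ i 0)) m : ℝ) / k ^ m - c i (m % a)| ≤ C₀ * (max β 1 / k) ^ m := by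
  -- `(k ^ M)_k = 1 0^M`, so the hypothesis bounds the total weight of the words of length `M`
  -- read from `δ i 0`.
  have hkm : (0 : ℝ) < k ^ m := by positivity
  have hm := hc i (m % a) (Nat.mod_lt m ha) (m / a)
  rw [Nat.div_add_mod, digits_pow_reverse hk, sWord_cons_replicate_zero hδ hk i hk,
    Finset.sum_range_one] at hm
  rw [div_sub' hkm.ne', abs_div, abs_of_pos hkm, div_pow, ← mul_div_assoc,
    div_le_div_iff_of_pos_right hkm, mul_comm ((k : ℝ) ^ m)]
  refine hm.trans (mul_le_mul_of_nonneg_left ?_ hC₀)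
  calc β ^ (a * (m / a)) ≤ max β 1 ^ (a * (m / a)) := pow_le_pow_left₀ hβ (le_max_left β 1) _
    _ ≤ max β 1 ^ m := pow_le_pow_right₀ (le_max_right β 1) (Nat.mul_div_le m a)

theorem exists_tendsto_wordsSum_div_pow (hk : 1 < k) (hd : 0 < d) {a : ℕ} (ha : 0 < a)
    (hperron : ∃ (β C₀ : ℝ), 0 < β ∧ β < (k : ℝ) ∧ 0 < C₀ ∧ ∃ c : Fin d → ℕ → ℚ,
      ∀ i : Fin d, ∀ j < a, ∀ n : ℕ,
        |(sWord k (f i) ((Nat.digits k (k ^ (a * n + j))).reverse) : ℝ) -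
            (c i j : ℝ) * (k : ℝ) ^ (a * n + j)| ≤ C₀ * β ^ (a * n))
    (i : Fin d) (r : ℕ) :
    ∃ ℓ, Tendsto (fun n => (wordsSum k (f i) (r + n * a) : ℝ) / k ^ (r + n * a)) atTop (𝓝 ℓ) := by
  have : Nonempty (Fin d) := ⟨⟨0, hd⟩⟩
  obtain ⟨β, C₀, hβ0, hβk, hC₀, c, hc⟩ := hperron
  have hk' : (1 : ℝ) < k := by exact_mod_cast hk
  have hη0 : 0 ≤ max β 1 / k := by positivity
  have hη1 : max β 1 / k < 1 := (div_lt_one (by linarith)).mpr (max_lt hβk hk')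
  have hbound := abs_wordsSum_div_pow_sub_le hδ hk ha hβ0.le hC₀.le c hc
  refine exists_tendsto_of_average (g := fun i m => (wordsSum k (f i) m : ℝ) / k ^ m) (σ := δ)
    (C := 2 * C₀) hk.pos ha (fun i m => ?_) (by positivity) hη0 hη1 (fun i m => ?_) i r
  · rw [wordsSum_succ hδ, pow_succ, ← div_div]
    push_cast
    rw [Finset.sum_div]
  · have h1 := hbound i (m + a)
    rw [Nat.add_mod_right] at h1
    have h2 := hbound i m
    have hpow : (max β 1 / k) ^ (m + a) ≤ (max β 1 / k) ^ m :=
      pow_le_pow_of_le_one hη0 hη1.le (by omega)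
    calc _ ≤ _ := abs_sub_le _ (c i (m % a) : ℝ) _
      _ ≤ C₀ * (max β 1 / k) ^ (m + a) + C₀ * (max β 1 / k) ^ m := by
          rw [abs_sub_comm (c i (m % a) : ℝ)]; exact add_le_add h1 h2
      _ ≤ 2 * C₀ * (max β 1 / k) ^ m := by nlinarith

theorem exists_tendsto_sWord_append_replicate (hk : 1 < k) {a : ℕ}
    (hsum : ∀ i r, ∃ ℓ,
      Tendsto (fun n => (wordsSum k (f i) (r + n * a) : ℝ) / k ^ (r + n * a)) atTop (𝓝 ℓ))
    {p : List ℕ} (hp : ∀ z ∈ p, z < k) (i : Fin d) (r : ℕ) :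
    ∃ ℓ, Tendsto (fun n => (sWord k (f i) (p ++ List.replicate (r + n * a) 0) : ℝ) /
      k ^ (r + n * a)) atTop (𝓝 ℓ) := by
  induction p generalizing i with
  | nil => exact ⟨0, by simp⟩
  | cons x p ih =>
    obtain ⟨hx, hp⟩ := List.forall_mem_cons.mp hp
    choose ℓ hℓ using hsum
    obtain ⟨ℓ', hℓ'⟩ := ih hp (δ i x)
    have hshift : ∀ y, Tendsto (fun n => (wordsSum k (f y) (p.length + (r + n * a)) : ℝ) /
        k ^ (r + n * a)) atTop (𝓝 (k ^ p.length * ℓ y (p.length + r))) := by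
      refine fun y => ((hℓ y (p.length + r)).const_mul _).congr fun n => ?_
      rw [← add_assoc, add_assoc p.length, pow_add]
      field_simp
    refine ⟨_, ((tendsto_finsetSum (Finset.range x) fun y _ => hshift (δ i y)).add hℓ').congr
      fun n => ?_⟩
    have hz : ∀ z ∈ List.replicate (r + n * a) 0, z < k := by simp [hk.pos]
    rw [List.cons_append, sWord_cons hδ hk i hx (List.forall_mem_append.mpr ⟨hp, hz⟩)]
    push_cast
    simp [add_div, Finset.sum_div]

theorem exists_pumping_increment (hk : 1 < k) (hd : 0 < d) {a : ℕ} (ha : 0 < a)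
    (hperron : ∃ (β C₀ : ℝ), 0 < β ∧ β < (k : ℝ) ∧ 0 < C₀ ∧ ∃ c : Fin d → ℕ → ℚ,
      ∀ i : Fin d, ∀ j < a, ∀ n : ℕ,
        |(sWord k (f i) ((Nat.digits k (k ^ (a * n + j))).reverse) : ℝ) -
            (c i j : ℝ) * (k : ℝ) ^ (a * n + j)| ≤ C₀ * β ^ (a * n))
    {s : ℕ → ℚ} (i : Fin d) (hs : ∀ n, s n = sWord k (f i) ((Nat.digits k n).reverse))
    {A B : List ℕ} (hA : A ≠ []) (hAd : ∀ x ∈ A, x < k) (hAlead : A.head? ≠ some 0)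
    (hBd : ∀ x ∈ B, x < k) (hδA : A.foldl δ i = (A ++ B).foldl δ i) :
    ∃ u : ℕ → ℚ,
      (∀ t, (∀ x ∈ t, x < k) →
        s (wordVal k (A ++ B ++ t)) = s (wordVal k (A ++ t)) + u t.length) ∧
      ∀ r, ∃ ℓ, Tendsto (fun n => (u (r + n * a) : ℝ) / k ^ (r + n * a)) atTop (𝓝 ℓ) := by
  have hABd : ∀ x ∈ A ++ B, x < k := List.forall_mem_append.mpr ⟨hAd, hBd⟩
  have hABlead : (A ++ B).head? ≠ some 0 := by rwa [List.head?_append_of_ne_nil _ hA]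
  refine ⟨fun L => sWord k (f i) (A ++ B ++ List.replicate L 0) -
    sWord k (f i) (A ++ List.replicate L 0), fun t ht => ?_, fun r => ?_⟩
  · rw [hs, hs, sWord_digits_wordVal hδ hk i (by simp [hA]) hABd hABlead ht,
      sWord_digits_wordVal hδ hk i hA hAd hAlead ht, ← hδA]
    ring
  · have hsum := exists_tendsto_wordsSum_div_pow hδ hk hd ha hperron
    obtain ⟨ℓ₁, h₁⟩ := exists_tendsto_sWord_append_replicate hδ hk hsum hABd i r
    obtain ⟨ℓ₂, h₂⟩ := exists_tendsto_sWord_append_replicate hδ hk hsum hAd i r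
    exact ⟨ℓ₁ - ℓ₂, (h₁.sub h₂).congr fun n => by push_cast; ring⟩

end Automaton

noncomputable def prefixRatio (k : ℕ) (s : ℕ → ℚ) (U w : List ℕ) : ℝ :=
  (s (wordVal k (U ++ w)) : ℝ) / wordVal k (U ++ w)

theorem prefixRatio_append (k : ℕ) (s : ℕ → ℚ) (U T w : List ℕ) :
    prefixRatio k s (U ++ T) w = prefixRatio k s U (T ++ w) := by
  simp [prefixRatio]

theorem lt_add_div_add_of_lt_div {c x y u z : ℝ} (hy : 0 < y) (hz : 0 ≤ z) (hx : c < x / y)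
    (hu : c * z ≤ u) : c < (x + u) / (y + z) := by
  rw [lt_div_iff₀ hy] at hx
  rw [lt_div_iff₀ (by positivity)]
  linarith

theorem sub_lt_div_of_lt_add_div_add {γ ε D Y x y u K : ℝ} (hε : 0 ≤ ε) (hK : 0 < K)
    (hy : 0 < y) (hyK : y ≤ Y * K) (hD : 0 ≤ D) (hQ : γ - ε < (x + u) / (y + D * K))
    (hP : x / y ≤ γ + ε) : (γ - ε) * D - 2 * ε * Y < u / K := by
  rw [lt_div_iff₀ (by positivity)] at hQ
  rw [div_le_iff₀ hy] at hP
  rw [lt_div_iff₀ hK]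
  nlinarith [mul_le_mul_of_nonneg_left hyK hε]

section Pump

variable {k : ℕ} {s : ℕ → ℚ} {P Q : List ℕ} {D : ℕ} {u : ℕ → ℚ} {γ ℓ : ℝ}
  {G : Filter (List ℕ)}
  (hsplit : ∀ t, (∀ x ∈ t, x < k) →
    s (wordVal k (Q ++ t)) = s (wordVal k (P ++ t)) + u t.length)
  (hval : ∀ t, wordVal k (Q ++ t) = wordVal k (P ++ t) + D * k ^ t.length)
include hsplit hval

theorem mul_le_of_frequently_lt_prefixRatio (hk : 1 < k) (hP : 0 < wordVal k P)
    (hu : Tendsto (fun t => (u t.length : ℝ) / k ^ t.length) G (𝓝 ℓ))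
    (hdig : ∀ᶠ t in G, ∀ x ∈ t, x < k)
    (hP_lt : ∀ ε > 0, ∀ᶠ t in G, prefixRatio k s P t < γ + ε)
    (hQ_lt : ∀ ε > 0, ∃ᶠ t in G, γ - ε < prefixRatio k s Q t) :
    γ * D ≤ ℓ := by
  set Y : ℝ := wordVal k P + 1
  have key : ∀ ε > 0, (γ - ε) * D - 2 * ε * Y - ε ≤ ℓ := by
    intro ε hε
    obtain ⟨t, hQt, hPt, hut, htd⟩ := ((hQ_lt ε hε).and_eventually
      ((hP_lt ε hε).and ((hu.eventually (Metric.ball_mem_nhds ℓ hε)).and hdig))).exists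
    have hy : (0 : ℝ) < wordVal k (P ++ t) := by exact_mod_cast pos_wordVal_append hk.pos hP t
    have hyK : (wordVal k (P ++ t) : ℝ) ≤ Y * k ^ t.length := by
      have := (wordVal_append_lt hk P htd).le
      simp only [Y]
      exact_mod_cast this
    rw [prefixRatio, hsplit t htd, hval t] at hQt
    push_cast at hQt
    have := sub_lt_div_of_lt_add_div_add hε.le (by positivity) hy hyK (by positivity) hQt hPt.le
    rw [Real.dist_eq, abs_lt] at hut
    linarith
  refine le_of_forall_sub_le fun ε hε => ?_
  have hc : 0 < (D : ℝ) + 2 * Y + 1 := by positivity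
  calc γ * D - ε = (γ - ε / (D + 2 * Y + 1)) * D - 2 * (ε / (D + 2 * Y + 1)) * Y -
        ε / (D + 2 * Y + 1) := by field_simp; ring
    _ ≤ ℓ := key _ (div_pos hε hc)

theorem frequently_lt_prefixRatio_of_mul_le (hk : 0 < k) (hP : 0 < wordVal k P) (hD : 0 < D)
    (hu : Tendsto (fun t => (u t.length : ℝ) / k ^ t.length) G (𝓝 ℓ)) (hℓ : γ * D ≤ ℓ)
    (hdig : ∀ᶠ t in G, ∀ x ∈ t, x < k)
    (hP_lt : ∀ ε > 0, ∃ᶠ t in G, γ - ε < prefixRatio k s P t) :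
    ∀ ε > 0, ∃ᶠ t in G, γ - ε < prefixRatio k s Q t := by
  intro ε hε
  have hD' : (1 : ℝ) ≤ D := by exact_mod_cast hD
  refine ((hP_lt ε hε).and_eventually
    ((hu.eventually (Metric.ball_mem_nhds ℓ hε)).and hdig)).mono ?_
  rintro t ⟨hPt, hut, htd⟩
  have hy : (0 : ℝ) < wordVal k (P ++ t) := by exact_mod_cast pos_wordVal_append hk hP t
  have hK : (0 : ℝ) < k ^ t.length := by positivity
  rw [prefixRatio, hsplit t htd, hval t]
  push_cast
  refine lt_add_div_add_of_lt_div hy (by positivity) hPt ?_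
  have hlow : (ℓ - ε) * k ^ t.length < u t.length := by
    rw [← lt_div_iff₀ hK]
    linarith [(abs_lt.mp (Real.dist_eq _ ℓ ▸ hut)).1]
  nlinarith [mul_le_mul_of_nonneg_right hℓ hK.le, mul_le_mul_of_nonneg_left hD' (mul_pos hε hK).le]

end Pump

section WordFilter

variable {k a j : ℕ}

theorem wordFilter_neBot (hk : 0 < k) (hj : j < a) : (wordFilter k a j).NeBot := by
  refine inf_principal_neBot_iff.mpr fun S hS => ?_
  obtain ⟨T, hT, hTS⟩ := mem_comap.mp hS
  obtain ⟨N, hN⟩ := mem_atTop_sets.mp hT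
  refine ⟨List.replicate (j + a * N) 0, hTS (hN _ ?_), ?_, ?_⟩
  · simp only [List.length_replicate]
    nlinarith
  · simp [hk]
  · simp [Nat.add_mul_mod_self_left, Nat.mod_eq_of_lt hj]

theorem eventually_wordFilter :
    ∀ᶠ w in wordFilter k a j, (∀ x ∈ w, x < k) ∧ w.length % a = j :=
  mem_inf_of_right (mem_principal_self _)

theorem tendsto_length_wordFilter : Tendsto List.length (wordFilter k a j) atTop :=
  tendsto_comap.mono_left inf_le_left

theorem tendsto_add_length_wordFilter (ha : 0 < a) (m : ℕ) :
    Tendsto (fun w => m + w.length) (wordFilter k a j)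
      (map (fun n => (m + j) % a + n * a) atTop) := by
  intro S hS
  obtain ⟨N, hN⟩ := mem_atTop_sets.mp (mem_map.mp hS)
  rw [mem_map]
  filter_upwards [tendsto_length_wordFilter.eventually_ge_atTop (N * a), eventually_wordFilter]
    with w hlen hw
  have hsplit : m + w.length = (m + j) % a + (m + w.length) / a * a := by
    rw [← hw.2, Nat.add_mod_mod, Nat.mod_add_div']
  rw [Set.mem_preimage, hsplit]
  exact hN _ ((Nat.le_div_iff_mul_le ha).mpr (by omega))

theorem tendsto_wordVal_append (hk : 1 < k) {U : List ℕ} (hU : 0 < wordVal k U) :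
    Tendsto (fun w => wordVal k (U ++ w)) (wordFilter k a j) atTop := by
  refine tendsto_atTop_mono (fun w => ?_) tendsto_length_wordFilter
  calc w.length ≤ k ^ w.length := (Nat.lt_pow_self hk).le
    _ ≤ wordVal k U * k ^ w.length := Nat.le_mul_of_pos_left _ hU
    _ ≤ wordVal k (U ++ w) := by rw [wordVal_append]; omega

variable {s : ℕ → ℚ} {U : List ℕ}

theorem gammaJ_le_limsup (hk : 1 < k) (hj : j < a) (hs : ∀ n, 0 ≤ s n) (hU : 0 < wordVal k U)
    (hbdd : IsBoundedUnder (· ≤ ·) atTop fun n : ℕ => (s n : ℝ) / n) :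
    gammaJ k a j s U ≤ limsup (fun n : ℕ => (s n : ℝ) / n) atTop := by
  have := wordFilter_neBot (a := a) (j := j) hk.pos hj
  refine (tendsto_wordVal_append hk hU).limsup_comp_le_limsup
    (u := fun n : ℕ => (s n : ℝ) / n) ?_ hbdd
  exact IsCoboundedUnder.of_frequently_ge (a := 0)
    (Eventually.of_forall fun n => div_nonneg (by exact_mod_cast hs n) n.cast_nonneg).frequently

theorem eventually_prefixRatio_lt (hk : 1 < k) (hU : 0 < wordVal k U)
    (hbdd : IsBoundedUnder (· ≤ ·) atTop fun n : ℕ => (s n : ℝ) / n) {b : ℝ}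
    (hb : limsup (fun n : ℕ => (s n : ℝ) / n) atTop < b) :
    ∀ᶠ w in wordFilter k a j, prefixRatio k s U w < b :=
  (tendsto_wordVal_append hk hU).eventually (eventually_lt_of_limsup_lt hb hbdd)

theorem frequently_lt_prefixRatio (hk : 0 < k) (hj : j < a) (hs : ∀ n, 0 ≤ s n) {b : ℝ}
    (hb : b < gammaJ k a j s U) : ∃ᶠ w in wordFilter k a j, b < prefixRatio k s U w := by
  have := wordFilter_neBot (a := a) (j := j) hk hj
  refine frequently_lt_of_lt_limsup (IsCoboundedUnder.of_frequently_ge (a := 0) ?_) hb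
  exact (Eventually.of_forall fun w =>
    div_nonneg (by exact_mod_cast hs _) (Nat.cast_nonneg _)).frequently

theorem le_gammaJ_of_frequently {γ : ℝ}
    (hbdd : IsBoundedUnder (· ≤ ·) (wordFilter k a j) (prefixRatio k s U))
    (h : ∀ ε > 0, ∃ᶠ w in wordFilter k a j, γ - ε < prefixRatio k s U w) :
    γ ≤ gammaJ k a j s U :=
  le_of_forall_sub_le fun ε hε => le_limsup_of_frequently_le ((h ε hε).mono fun _ => le_of_lt) hbdd

end WordFilter

theorem frequently_lt_prefixRatio_pump {k a j : ℕ} (hk : 1 < k) (ha : 0 < a) {s u : ℕ → ℚ}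
    {γ : ℝ} {A B C : List ℕ} (hA : 0 < wordVal k A) (hB : B ≠ []) (hBd : ∀ x ∈ B, x < k)
    (hCd : ∀ x ∈ C, x < k) (hBlen : a ∣ B.length)
    (hsplit : ∀ t, (∀ x ∈ t, x < k) →
      s (wordVal k (A ++ B ++ t)) = s (wordVal k (A ++ t)) + u t.length)
    (hu : ∀ r, ∃ ℓ, Tendsto (fun n => (u (r + n * a) : ℝ) / k ^ (r + n * a)) atTop (𝓝 ℓ))
    (hAC : ∀ ε > 0, ∀ᶠ w in wordFilter k a j, prefixRatio k s (A ++ C) w < γ + ε)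
    (hABC : ∀ ε > 0, ∃ᶠ w in wordFilter k a j, γ - ε < prefixRatio k s (A ++ B ++ C) w) :
    ∀ ε > 0, ∃ᶠ w in wordFilter k a j, γ - ε < prefixRatio k s (A ++ B ++ B ++ C) w := by
  obtain ⟨ℓ, hℓ⟩ := hu ((C.length + j) % a)
  have hlim : ∀ T : List ℕ, (T.length + j) % a = (C.length + j) % a →
      Tendsto (fun t => (u t.length : ℝ) / k ^ t.length) (map (T ++ ·) (wordFilter k a j))
        (𝓝 ℓ) := by
    intro T hT
    rw [← hT] at hℓ
    simpa [tendsto_map'_iff, Function.comp_def] using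
      ((tendsto_map'_iff (f := fun L : ℕ => (u L : ℝ) / k ^ L)).mpr hℓ).comp
        (tendsto_add_length_wordFilter ha T.length)
  have hdig : ∀ T : List ℕ, (∀ x ∈ T, x < k) →
      ∀ᶠ t in map (T ++ ·) (wordFilter k a j), ∀ x ∈ t, x < k := fun T hT =>
    eventually_map.mpr <|
      eventually_wordFilter.mono fun w hw => List.forall_mem_append.mpr ⟨hT, hw.1⟩
  have hval := wordVal_append_eq_add (wordVal_lt_wordVal_append hk hA hB).le
  have hD := Nat.sub_pos_of_lt (wordVal_lt_wordVal_append hk hA hB)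
  have hℓγ := mul_le_of_frequently_lt_prefixRatio hsplit hval hk hA (hlim C rfl) (hdig C hCd)
    (fun ε hε => eventually_map.mpr <| by simpa only [prefixRatio_append] using hAC ε hε)
    (fun ε hε => frequently_map.mpr <| by simpa only [prefixRatio_append] using hABC ε hε)
  have hBC : ((B ++ C).length + j) % a = (C.length + j) % a := by
    obtain ⟨b, hb⟩ := hBlen
    simp [hb, Nat.add_assoc]
  intro ε hε
  have := frequently_lt_prefixRatio_of_mul_le hsplit hval hk.pos hA hD (hlim _ hBC) hℓγ
    (hdig _ (List.forall_mem_append.mpr ⟨hBd, hCd⟩))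
    (fun ε hε => frequently_map.mpr <| by
      simpa only [prefixRatio_append, List.append_assoc] using hABC ε hε) ε hε
  simpa only [prefixRatio_append, List.append_assoc] using frequently_map.mp this

theorem gamma_pump_once_general
    (k d a : ℕ) (hk : 2 ≤ k) (hd : 0 < d) (ha : 1 ≤ a)
    (f : Fin d → List ℕ → ℚ) (δ : Fin d → ℕ → Fin d)
    (hnn : ∀ i w, 0 ≤ f i w)
    (hδ : ∀ i : Fin d, ∀ x < k, ∀ w, f i (x :: w) = f (δ i x) w)
    (s : ℕ → ℚ) (hs : ∀ n, s n = sWord k (f ⟨0, hd⟩) ((Nat.digits k n).reverse))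
    (γ : ℝ) (hγdef : γ = Filter.atTop.limsup (fun n : ℕ => (s n : ℝ) / n)) (hγ : 0 < γ)
    (hperron : ∃ (β C₀ : ℝ), 0 < β ∧ β < (k : ℝ) ∧ 0 < C₀ ∧ ∃ c : Fin d → ℕ → ℚ,
      ∀ i : Fin d, ∀ j < a, ∀ n : ℕ,
        |(sWord k (f i) ((Nat.digits k (k ^ (a * n + j))).reverse) : ℝ) -
            (c i j : ℝ) * (k : ℝ) ^ (a * n + j)| ≤ C₀ * β ^ (a * n))
    (j : ℕ) (hj : j < a)
    (A B C : List ℕ)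
    (hAne : A ≠ []) (hBne : B ≠ [])
    (hAdig : ∀ x ∈ A, x < k) (hBdig : ∀ x ∈ B, x < k) (hCdig : ∀ x ∈ C, x < k)
    (hBlen : a ∣ B.length)
    (hAlead : A.head? ≠ some 0)
    (hδA : A.foldl δ ⟨0, hd⟩ = (A ++ B).foldl δ ⟨0, hd⟩)
    (hgam : gammaJ k a j s (A ++ B ++ C) = γ) :
    gammaJ k a j s (A ++ B ++ B ++ C) = γ := by
  -- The `limsup` of a sequence unbounded above is `0` in Mathlib, which `hγ` rules out.
  have hbdd : IsBoundedUnder (· ≤ ·) atTop fun n : ℕ => (s n : ℝ) / n := by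
    by_contra h
    exact hγ.ne' (hγdef.trans (Real.limsup_of_not_isBoundedUnder h))
  have hs0 : ∀ n, 0 ≤ s n := fun n => hs n ▸ Finset.sum_nonneg fun v _ => hnn _ v
  have hA : 0 < wordVal k A := pos_wordVal (by omega) hAne hAlead
  have hpos : 0 < wordVal k (A ++ B ++ B ++ C) := by
    simpa using pos_wordVal_append (by omega) hA (B ++ B ++ C)
  obtain ⟨u, hsplit, hu⟩ :=
    exists_pumping_increment hδ hk hd ha hperron _ hs hAne hAdig hAlead hBdig hδA
  have hpump := frequently_lt_prefixRatio_pump (γ := γ) hk ha hA hBne hBdig hCdig hBlen hsplit hu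
    (fun ε hε => eventually_prefixRatio_lt hk (pos_wordVal_append (by omega) hA C) hbdd
      (by linarith))
    (fun ε hε => frequently_lt_prefixRatio (by omega) hj hs0 (by linarith))
  refine le_antisymm ((gammaJ_le_limsup hk hj hs0 hpos hbdd).trans hγdef.ge)
    (le_gammaJ_of_frequently ⟨γ + 1, eventually_map.mpr ?_⟩ hpump)
  exact (eventually_prefixRatio_lt hk hpos hbdd (by linarith)).mono fun _ => le_of_lt

theorem gamma_pump_once
    (k d a : ℕ) (hk : 2 ≤ k) (hd : 0 < d) (ha : 1 ≤ a)
    (f : Fin d → List ℕ → ℚ) (δ : Fin d → ℕ → Fin d)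
    (hnn : ∀ i w, 0 ≤ f i w)
    (hzero : ∀ w, f ⟨0, hd⟩ (0 :: w) = f ⟨0, hd⟩ w)
    (hδ : ∀ i : Fin d, ∀ x < k, ∀ w, f i (x :: w) = f (δ i x) w)
    (s : ℕ → ℚ) (hs : ∀ n, s n = sWord k (f ⟨0, hd⟩) ((Nat.digits k n).reverse))
    (γ : ℝ) (hγdef : γ = Filter.atTop.limsup (fun n : ℕ => (s n : ℝ) / n)) (hγ : 0 < γ)
    (hperron : ∃ (β C₀ : ℝ), 0 < β ∧ β < (k : ℝ) ∧ 0 < C₀ ∧ ∃ c : Fin d → ℕ → ℚ,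
      ∀ i : Fin d, ∀ j < a, ∀ n : ℕ,
        |(sWord k (f i) ((Nat.digits k (k ^ (a * n + j))).reverse) : ℝ) -
            (c i j : ℝ) * (k : ℝ) ^ (a * n + j)| ≤ C₀ * β ^ (a * n))
    (j : ℕ) (hj : j < a)
    (A B C : List ℕ)
    (hAne : A ≠ []) (hBne : B ≠ []) (hCne : C ≠ [])
    (hAdig : ∀ x ∈ A, x < k) (hBdig : ∀ x ∈ B, x < k) (hCdig : ∀ x ∈ C, x < k)
    (hAlen : a ∣ A.length) (hBlen : a ∣ B.length) (hClen : a ∣ C.length)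
    (hAlead : A.head? ≠ some 0)
    (hδA : A.foldl δ ⟨0, hd⟩ = (A ++ B).foldl δ ⟨0, hd⟩)
    (hδAB : (A ++ B).foldl δ ⟨0, hd⟩ = (A ++ B ++ C).foldl δ ⟨0, hd⟩)
    (hgam : gammaJ k a j s (A ++ B ++ C) = γ) :
    gammaJ k a j s (A ++ B ++ B ++ C) = γ :=
  gamma_pump_once_general k d a hk hd ha f δ hnn hδ s hs γ hγdef hγ hperron j hj A B C hAne hBne
    hAdig hBdig hCdig hBlen hAlead hδA hgam
end

section
/- Let k ≥ 2 be a natural number and let S ⊆ ℕ be a k-automatic set. If liminf_{N→∞} π_S(N)/N = 0, then limsup_{N→∞} π_S(N)/N = 0. -/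
open Filter

/-!
The state reached by a DFAO after reading the digits of a positive `n` determines, for every `ℓ`,
which of the numbers `n * k ^ ℓ + r` with `r < k ^ ℓ` lie in `S`. As there are finitely many
states, every block `[n k^ℓ, (n + 1) k^ℓ)` with `n ≥ 1` contains as many elements of `S` as one
with `n ≤ B`, for a `B` independent of `ℓ`, and all of those lie below `(B + 1) k^ℓ`. A single
`N ≈ (B + 1) k^ℓ` with `π_S(N) / N` small therefore makes all blocks of length `k^ℓ` sparse, and
this bounds `π_S(N) / N` for every large `N`.
-/

open Topology

open Finset Classical in
noncomputable def blockCount (S : Set ℕ) (L n : ℕ) : ℕ := #{r ∈ range L | n * L + r ∈ S}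

section Density

open Finset

variable (S : Set ℕ)

open Classical in
theorem piCount_eq_card_filter (N : ℕ) : piCount S N = #{n ∈ range N | n ∈ S} := by
  rw [piCount, ← Set.ncard_coe_finset]
  congr 1
  ext n
  simp [and_comm]

theorem piCount_mono {M N : ℕ} (h : M ≤ N) : piCount S M ≤ piCount S N :=
  Set.ncard_le_ncard (Set.inter_subset_inter_right _ (Set.Iio_subset_Iio h))
    ((Set.finite_Iio N).inter_of_right _)

theorem piCount_le_self (N : ℕ) : piCount S N ≤ N := by
  classical
  rw [piCount_eq_card_filter]
  exact (card_filter_le _ _).trans (card_range N).le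

open Classical in
theorem piCount_add (a b : ℕ) :
    piCount S (a + b) = piCount S a + #{r ∈ range b | a + r ∈ S} := by
  rw [piCount_eq_card_filter, piCount_eq_card_filter, range_add, filter_union,
    card_union_of_disjoint (disjoint_filter_filter (disjoint_range_addLeftEmbedding a _)),
    filter_map, card_map]
  rfl

theorem piCount_mul_add (L n : ℕ) :
    piCount S (n * L + L) = piCount S (n * L) + blockCount S L n := by
  classical
  rw [piCount_add, blockCount]

theorem blockCount_le_piCount (L n : ℕ) : blockCount S L n ≤ piCount S ((n + 1) * L) := by
  rw [add_one_mul, piCount_mul_add]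
  exact Nat.le_add_left _ _

theorem blockCount_congr {L n n' : ℕ} (h : ∀ r < L, n * L + r ∈ S ↔ n' * L + r ∈ S) :
    blockCount S L n = blockCount S L n' := by
  classical
  unfold blockCount
  exact congrArg card (filter_congr fun r hr => h r (mem_range.1 hr))

theorem piCount_le_of_blockCount_le {L : ℕ} (hL : 0 < L) {δ : ℝ}
    (h : ∀ n, 0 < n → (blockCount S L n : ℝ) ≤ δ * L) (N : ℕ) :
    (piCount S N : ℝ) ≤ L + δ * N := by
  have hL' : (0 : ℝ) < L := Nat.cast_pos.2 hL
  have hδ : 0 ≤ δ := nonneg_of_mul_nonneg_left ((Nat.cast_nonneg _).trans (h 1 one_pos)) hL'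
  have hblocks : ∀ q : ℕ, (piCount S ((q + 1) * L) : ℝ) ≤ L + δ * (q * L) := by
    intro q
    induction q with
    | zero => simpa using piCount_le_self S L
    | succ q ih =>
      rw [add_one_mul (q + 1), piCount_mul_add]
      push_cast
      linarith [h (q + 1) q.succ_pos]
  calc (piCount S N : ℝ) ≤ piCount S ((N / L + 1) * L) := by
        gcongr
        exact piCount_mono S ((Nat.lt_div_mul_add hL).le.trans (add_one_mul _ _).ge)
    _ ≤ L + δ * ((N / L : ℕ) * L) := hblocks _
    _ ≤ L + δ * N := by
        gcongr
        exact_mod_cast Nat.div_mul_le_self N L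

theorem tendsto_piCount_div_of_forall_blockCount_le
    (h : ∀ δ > 0, ∃ L > 0, ∀ n, 0 < n → (blockCount S L n : ℝ) ≤ δ * L) :
    Tendsto (fun N : ℕ => (piCount S N : ℝ) / N) atTop (𝓝 0) := by
  refine tendsto_order.2 ⟨fun a ha => Eventually.of_forall fun N => ha.trans_le (by positivity),
    fun γ hγ => ?_⟩
  obtain ⟨L, hL, hblock⟩ := h (γ / 2) (half_pos hγ)
  filter_upwards [(tendsto_const_div_atTop_nhds_zero_nat (L : ℝ)).eventually
    (gt_mem_nhds (half_pos hγ)), eventually_gt_atTop 0] with N hLN hN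
  have hN' : (0 : ℝ) < N := Nat.cast_pos.2 hN
  rw [div_lt_iff₀ hN'] at hLN ⊢
  linarith [piCount_le_of_blockCount_le S hL hblock N]

theorem exists_piCount_mul_pow_le {k : ℕ} (hk : 2 ≤ k) {C : ℕ} (hC : 0 < C)
    (h0 : atTop.liminf (fun N : ℕ => (piCount S N : ℝ) / N) = 0) {δ : ℝ} (hδ : 0 < δ) :
    ∃ ℓ, (piCount S (C * k ^ ℓ) : ℝ) ≤ δ * k ^ ℓ := by
  have hbdd : atTop.IsCoboundedUnder (· ≥ ·) (fun N : ℕ => (piCount S N : ℝ) / N) :=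
    (isBoundedUnder_of ⟨1, fun N => div_le_one_of_le₀ (by exact_mod_cast piCount_le_self S N)
      N.cast_nonneg⟩).isCoboundedUnder_ge
  have hfreq : ∃ᶠ N : ℕ in atTop, (piCount S N : ℝ) / N < δ / (C * k) :=
    frequently_lt_of_liminf_lt hbdd (by rw [h0]; positivity)
  obtain ⟨N, hNδ, hCN⟩ := (hfreq.and_eventually (eventually_ge_atTop C)).exists
  set ℓ := Nat.log k (N / C)
  have hlow : C * k ^ ℓ ≤ N :=
    (Nat.mul_le_mul_left C (Nat.pow_log_le_self k (Nat.div_pos hCN hC).ne')).trans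
      (Nat.mul_div_le N C)
  have hup : N < C * k ^ (ℓ + 1) := by
    rw [mul_comm, ← Nat.div_lt_iff_lt_mul hC]
    exact Nat.lt_pow_succ_log_self (by omega) _
  have hN : (0 : ℝ) < N := Nat.cast_pos.2 (hC.trans_le hCN)
  refine ⟨ℓ, ?_⟩
  calc (piCount S (C * k ^ ℓ) : ℝ) ≤ piCount S N := by exact_mod_cast piCount_mono S hlow
    _ ≤ δ / (C * k) * N := ((div_lt_iff₀ hN).1 hNδ).le
    _ ≤ δ / (C * k) * (C * k ^ (ℓ + 1)) := by gcongr; exact_mod_cast hup.le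
    _ = δ * k ^ ℓ := by field_simp; ring

end Density

theorem foldl_digits_mul_add {Q : Type*} (δ : Q → ℕ → Q) (q₀ : Q) {k : ℕ} (hk : 1 < k)
    {n d : ℕ} (hn : n ≠ 0) (hd : d < k) :
    ((Nat.digits k (n * k + d)).reverse).foldl δ q₀
      = δ (((Nat.digits k n).reverse).foldl δ q₀) d := by
  rw [show n * k + d = d + k * n by ring, Nat.digits_add k hk d n hd (Or.inr hn),
    List.reverse_cons, List.foldl_append]
  rfl

theorem apply_mul_pow_add_eq_of_apply_eq {Q : Type*} {k : ℕ} (hk : 0 < k) {s : ℕ → Q}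
    {δ : Q → ℕ → Q} (hs : ∀ n d, n ≠ 0 → d < k → s (n * k + d) = δ (s n) d)
    {n n' : ℕ} (hn : n ≠ 0) (hn' : n' ≠ 0) (h : s n = s n') (ℓ r : ℕ) (hr : r < k ^ ℓ) :
    s (n * k ^ ℓ + r) = s (n' * k ^ ℓ + r) := by
  induction ℓ generalizing r with
  | zero => simp_all
  | succ ℓ ih =>
    have hsplit : ∀ m, m * k ^ (ℓ + 1) + r = (m * k ^ ℓ + r / k) * k + r % k := fun m => by
      rw [pow_succ]
      linarith [Nat.div_add_mod' r k]
    have hpos : ∀ m, m ≠ 0 → m * k ^ ℓ + r / k ≠ 0 := fun m hm =>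
      (Nat.add_pos_left (Nat.mul_pos (Nat.pos_of_ne_zero hm) (Nat.pow_pos hk)) _).ne'
    have hr' : r / k < k ^ ℓ := (Nat.div_lt_iff_lt_mul hk).2 (pow_succ k ℓ ▸ hr)
    rw [hsplit, hsplit, hs _ _ (hpos n hn) (Nat.mod_lt r hk),
      hs _ _ (hpos n' hn') (Nat.mod_lt r hk), ih _ hr']

theorem Finite.exists_forall_exists_le_apply_eq {Q : Type*} [Finite Q] (f : ℕ → Q) :
    ∃ B, ∀ n, ∃ m ≤ B, f m = f n := by
  have := Fintype.ofFinite (Set.range f)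
  choose g hg using fun q : Set.range f => q.2
  exact ⟨Finset.univ.sup g, fun n => ⟨g ⟨f n, n, rfl⟩, Finset.le_sup (Finset.mem_univ _), hg _⟩⟩

theorem IsAutomaticSet.exists_bound_block_representative {k : ℕ} (hk : 2 ≤ k) {S : Set ℕ}
    (hS : IsAutomaticSet k S) :
    ∃ B, ∀ n, 0 < n → ∃ n' ≤ B,
      ∀ ℓ, ∀ r < k ^ ℓ, (n * k ^ ℓ + r ∈ S ↔ n' * k ^ ℓ + r ∈ S) := by
  obtain ⟨Q, _, q₀, δ, τ, hτ⟩ := hS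
  set s : ℕ → Q := fun n => ((Nat.digits k n).reverse).foldl δ q₀
  obtain ⟨B, hB⟩ := Finite.exists_forall_exists_le_apply_eq fun n => s (n + 1)
  refine ⟨B + 1, fun n hn => ?_⟩
  obtain ⟨m, hmB, hm⟩ := hB (n - 1)
  refine ⟨m + 1, by omega, fun ℓ r hr => ?_⟩
  have hstate : s (n * k ^ ℓ + r) = s ((m + 1) * k ^ ℓ + r) :=
    apply_mul_pow_add_eq_of_apply_eq (by omega)
      (fun _ _ hn hd => foldl_digits_mul_add δ q₀ (by omega) hn hd) hn.ne' m.succ_ne_zero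
      (by rw [hm, Nat.sub_add_cancel hn]) ℓ r hr
  have hind : S.indicator (fun _ => 1) (n * k ^ ℓ + r)
      = S.indicator (fun _ => 1) ((m + 1) * k ^ ℓ + r) := by
    rw [hτ, hτ]
    exact congrArg τ hstate
  by_cases h1 : n * k ^ ℓ + r ∈ S <;> by_cases h2 : (m + 1) * k ^ ℓ + r ∈ S <;>
    simp [h1, h2] at hind ⊢

theorem liminf_zero_imp_limsup_zero
    (k : ℕ) (hk : 2 ≤ k) (S : Set ℕ) (hS : IsAutomaticSet k S)
    (h0 : Filter.atTop.liminf (fun N : ℕ => (piCount S N : ℝ) / N) = 0) :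
    Filter.atTop.limsup (fun N : ℕ => (piCount S N : ℝ) / N) = 0 := by
  obtain ⟨B, hB⟩ := hS.exists_bound_block_representative hk
  refine (tendsto_piCount_div_of_forall_blockCount_le S fun δ hδ => ?_).limsup_eq
  obtain ⟨ℓ, hℓ⟩ := exists_piCount_mul_pow_le S hk B.succ_pos h0 hδ
  refine ⟨k ^ ℓ, by positivity, fun n hn => ?_⟩
  obtain ⟨n', hn'B, hn'⟩ := hB n hn
  calc (blockCount S (k ^ ℓ) n : ℝ) = blockCount S (k ^ ℓ) n' := by
        rw [blockCount_congr S (hn' ℓ)]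
    _ ≤ piCount S ((n' + 1) * k ^ ℓ) := by exact_mod_cast blockCount_le_piCount S _ _
    _ ≤ piCount S ((B + 1) * k ^ ℓ) := by
        exact_mod_cast piCount_mono S (Nat.mul_le_mul_right _ (by omega))
    _ ≤ δ * (k ^ ℓ : ℕ) := by exact_mod_cast hℓ
end

section
/- Let k ≥ 2 be a natural number and let S be the set of natural numbers whose base-k expansion has even length (where 0, having the empty expansion, belongs to S). Then the lower density of S equals 1/(k+1) and the upper density of S equals k/(k+1). -/
/-!
Let `C N` count the `n < N` whose base-`k` expansion has even length. The numbers of length `L + 1`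
fill the block `[k ^ L, k ^ (L + 1))`, so `C` is constant on the blocks with `L` even and grows with
slope one on those with `L` odd. Summing the block sizes gives `(k + 1) C (k ^ (2m)) = k ^ (2m + 1) + 1`,
and from this `N ≤ (k + 1) C N ≤ k N + 1` for all `N`. The lower bound is attained up to `+1` at the odd
powers `N = k ^ (2m + 1)` and the upper bound exactly at the even powers `N = k ^ (2m)`.
-/

open Filter

open Topology

theorem piCount_setOf (p : ℕ → Prop) [DecidablePred p] (N : ℕ) :
    piCount {n | p n} N = Nat.count p N := by
  rw [piCount, Nat.count_eq_card_filter_range, ← Set.ncard_coe_finset]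
  congr 1
  ext n
  simp [and_comm]

namespace Filter

variable {ι κ α : Type*} [ConditionallyCompleteLinearOrder α] [TopologicalSpace α] [OrderTopology α]
  {f : Filter ι} {g : Filter κ} [NeBot g] {u v : ι → α} {a : α} {φ : κ → ι}

theorem limsup_eq_of_eventuallyLE_of_tendsto_comp (hv : Tendsto v f (𝓝 a)) (huv : u ≤ᶠ[f] v)
    (hφ : Tendsto φ g f) (hu : Tendsto (u ∘ φ) g (𝓝 a)) : limsup u f = a := by
  have : NeBot f := hφ.neBot
  have hbdd : IsBoundedUnder (· ≤ ·) f u := hv.isBoundedUnder_le.mono_le huv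
  have hcobdd : IsCoboundedUnder (· ≤ ·) (map φ g) u := hu.isCoboundedUnder_le
  refine le_antisymm ?_ ?_
  · calc limsup u f ≤ limsup v f :=
          limsup_le_limsup huv (hcobdd.mono (map_mono hφ)) hv.isBoundedUnder_le
      _ = a := hv.limsup_eq
  · calc a = limsup (u ∘ φ) g := hu.limsup_eq.symm
      _ ≤ limsup u f := hφ.limsup_comp_le_limsup hcobdd hbdd

theorem liminf_eq_of_eventuallyLE_of_tendsto_comp (hv : Tendsto v f (𝓝 a)) (hvu : v ≤ᶠ[f] u)
    (hφ : Tendsto φ g f) (hu : Tendsto (u ∘ φ) g (𝓝 a)) : liminf u f = a :=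
  limsup_eq_of_eventuallyLE_of_tendsto_comp (α := αᵒᵈ) hv hvu hφ hu

end Filter

def evenLengthCount (k N : ℕ) : ℕ := Nat.count (fun n => Even (k.digits n).length) N

section Counting

variable {k : ℕ}

theorem Nat.length_digits_eq_of_pow_le_of_lt_pow (hk : 1 < k) {L n : ℕ} (h₁ : k ^ L ≤ n)
    (h₂ : n < k ^ (L + 1)) : (k.digits n).length = L + 1 := by
  rw [Nat.length_digits k n hk ((pow_pos (by omega) L).trans_le h₁).ne',
    Nat.log_eq_of_pow_le_of_lt_pow h₁ h₂]

theorem evenLengthCount_pow_add (hk : 1 < k) {L b : ℕ} (hb : k ^ L + b ≤ k ^ (L + 1)) :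
    evenLengthCount k (k ^ L + b) = evenLengthCount k (k ^ L) + if Even (L + 1) then b else 0 := by
  have hlen : ∀ j < b, (k.digits (k ^ L + j)).length = L + 1 := fun j hj =>
    Nat.length_digits_eq_of_pow_le_of_lt_pow hk (by omega) (by omega)
  rw [evenLengthCount, Nat.count_add]
  congr 1
  split_ifs with hL
  · exact Nat.count_of_forall fun j hj => by rwa [hlen j hj]
  · exact Nat.count_of_forall_not fun j hj => by rwa [hlen j hj]

theorem evenLengthCount_of_pow_le_of_le_pow {L N : ℕ} (hk : 1 < k) (hL : Even L) (h₁ : k ^ L ≤ N)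
    (h₂ : N ≤ k ^ (L + 1)) : evenLengthCount k N = evenLengthCount k (k ^ L) := by
  obtain ⟨b, rfl⟩ := Nat.exists_eq_add_of_le h₁
  simp [evenLengthCount_pow_add hk h₂, Nat.even_add_one, hL]

theorem evenLengthCount_add_pow_of_pow_le_of_le_pow {L N : ℕ} (hk : 1 < k) (hL : Odd L)
    (h₁ : k ^ L ≤ N) (h₂ : N ≤ k ^ (L + 1)) :
    evenLengthCount k N + k ^ L = evenLengthCount k (k ^ L) + N := by
  obtain ⟨b, rfl⟩ := Nat.exists_eq_add_of_le h₁
  rw [evenLengthCount_pow_add hk h₂, if_pos (Nat.even_add_one.2 (Nat.not_even_iff_odd.2 hL))]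
  ring

theorem succ_mul_evenLengthCount_pow_two_mul (hk : 1 < k) (m : ℕ) :
    (k + 1) * evenLengthCount k (k ^ (2 * m)) = k ^ (2 * m + 1) + 1 := by
  induction m with
  | zero => simp [evenLengthCount, Nat.count_one]
  | succ m ih =>
    have hodd := evenLengthCount_of_pow_le_of_le_pow hk (even_two_mul m)
      (Nat.pow_le_pow_right (by omega) (by omega)) le_rfl
    have heven := evenLengthCount_add_pow_of_pow_le_of_le_pow hk (odd_two_mul_add_one m)
      (Nat.pow_le_pow_right (by omega) (by omega)) le_rfl
    rw [hodd] at heven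
    rw [show 2 * (m + 1) = 2 * m + 1 + 1 by ring]
    have hpow₂ : k ^ (2 * m + 1 + 1 + 1) = k * k ^ (2 * m + 1 + 1) := pow_succ' _ _
    have hpow₁ : k ^ (2 * m + 1 + 1) = k * k ^ (2 * m + 1) := pow_succ' _ _
    nlinarith [heven, ih]

theorem succ_mul_evenLengthCount_pow_two_mul_add_one (hk : 1 < k) (m : ℕ) :
    (k + 1) * evenLengthCount k (k ^ (2 * m + 1)) = k ^ (2 * m + 1) + 1 := by
  rw [evenLengthCount_of_pow_le_of_le_pow hk (even_two_mul m)
    (Nat.pow_le_pow_right (by omega) (by omega)) le_rfl, succ_mul_evenLengthCount_pow_two_mul hk]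

theorem succ_mul_evenLengthCount_mem_Icc (hk : 1 < k) (N : ℕ) :
    (k + 1) * evenLengthCount k N ∈ Set.Icc N (k * N + 1) := by
  rcases Nat.eq_zero_or_pos N with rfl | hN
  · simp [evenLengthCount]
  have h₁ : k ^ Nat.log k N ≤ N := Nat.pow_log_le_self k hN.ne'
  have h₂ : N < k ^ (Nat.log k N + 1) := Nat.lt_pow_succ_log_self hk N
  obtain ⟨m, hm | hm⟩ := Nat.even_or_odd' (Nat.log k N) <;> rw [hm] at h₁ h₂
  · have hC := succ_mul_evenLengthCount_pow_two_mul hk m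
    rw [← evenLengthCount_of_pow_le_of_le_pow hk (even_two_mul m) h₁ h₂.le] at hC
    have hpow : k ^ (2 * m + 1) = k * k ^ (2 * m) := pow_succ' _ _
    constructor <;> nlinarith
  · have hC := succ_mul_evenLengthCount_pow_two_mul_add_one hk m
    have hN := evenLengthCount_add_pow_of_pow_le_of_le_pow hk (odd_two_mul_add_one m) h₁ h₂.le
    have hpow : k ^ (2 * m + 1 + 1) = k * k ^ (2 * m + 1) := pow_succ' _ _
    constructor <;> nlinarith

end Counting

theorem tendsto_mul_add_one_div_mul_natCast (a c : ℝ) :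
    Tendsto (fun N : ℕ => (a * N + 1) / (c * N)) atTop (𝓝 (a / c)) := by
  have hlim : Tendsto (fun N : ℕ => (a + 1 / (N : ℝ)) / c) atTop (𝓝 ((a + 0) / c)) :=
    (tendsto_const_nhds.add tendsto_one_div_atTop_nhds_zero_nat).div_const c
  rw [add_zero] at hlim
  refine hlim.congr' ((eventually_ne_atTop 0).mono fun N hN => ?_)
  dsimp only
  rw [mul_comm c, ← div_div, add_div (a * N), mul_div_assoc, div_self (Nat.cast_ne_zero.2 hN),
    mul_one]

section Density

variable {k : ℕ}

theorem evenLengthCount_div_eq_of_succ_mul_eq (a : ℝ) (N : ℕ)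
    (h : ((k : ℝ) + 1) * evenLengthCount k N = a * N + 1) :
    (evenLengthCount k N : ℝ) / N = (a * N + 1) / ((k + 1) * N) := by
  rw [← h, mul_div_mul_left _ _ (by positivity)]

theorem one_div_succ_le_evenLengthCount_div (hk : 1 < k) {N : ℕ} (hN : N ≠ 0) :
    1 / ((k : ℝ) + 1) ≤ (evenLengthCount k N : ℝ) / N := by
  rw [div_le_div_iff₀ (by positivity) (by positivity), one_mul, mul_comm]
  exact_mod_cast (succ_mul_evenLengthCount_mem_Icc hk N).1

theorem evenLengthCount_div_le (hk : 1 < k) (N : ℕ) :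
    (evenLengthCount k N : ℝ) / N ≤ (k * N + 1) / ((k + 1) * N) := by
  rw [← mul_div_mul_left _ (N : ℝ) (by positivity : (k : ℝ) + 1 ≠ 0)]
  gcongr
  exact_mod_cast (succ_mul_evenLengthCount_mem_Icc hk N).2

theorem tendsto_pow_two_mul_add_atTop (hk : 1 < k) (r : ℕ) :
    Tendsto (fun m => k ^ (2 * m + r)) atTop atTop :=
  ((pow_right_strictMono₀ hk).comp fun _ _ h => by omega).tendsto_atTop

theorem tendsto_evenLengthCount_div_pow_odd (hk : 1 < k) :
    Tendsto (fun m => (evenLengthCount k (k ^ (2 * m + 1)) : ℝ) / (k ^ (2 * m + 1) : ℕ)) atTop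
      (𝓝 (1 / ((k : ℝ) + 1))) := by
  refine ((tendsto_mul_add_one_div_mul_natCast 1 _).comp (tendsto_pow_two_mul_add_atTop hk 1)).congr
    fun m => (evenLengthCount_div_eq_of_succ_mul_eq 1 _ ?_).symm
  rw [one_mul]
  exact_mod_cast succ_mul_evenLengthCount_pow_two_mul_add_one hk m

theorem tendsto_evenLengthCount_div_pow_even (hk : 1 < k) :
    Tendsto (fun m => (evenLengthCount k (k ^ (2 * m)) : ℝ) / (k ^ (2 * m) : ℕ)) atTop
      (𝓝 ((k : ℝ) / ((k : ℝ) + 1))) := by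
  refine ((tendsto_mul_add_one_div_mul_natCast k _).comp (tendsto_pow_two_mul_add_atTop hk 0)).congr
    fun m => (evenLengthCount_div_eq_of_succ_mul_eq k _ ?_).symm
  have h := succ_mul_evenLengthCount_pow_two_mul hk m
  rw [pow_succ'] at h
  exact_mod_cast h

end Density

theorem densities_of_even_length_expansion_set
    (k : ℕ) (hk : 2 ≤ k)
    (S : Set ℕ) (hS : S = {n : ℕ | (Nat.digits k n).length % 2 = 0}) :
    Filter.atTop.liminf (fun N : ℕ => (piCount S N : ℝ) / N) = 1 / ((k : ℝ) + 1) ∧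
    Filter.atTop.limsup (fun N : ℕ => (piCount S N : ℝ) / N) = (k : ℝ) / ((k : ℝ) + 1) := by
  have hcount : ∀ N, piCount S N = evenLengthCount k N := fun N => by
    simp_rw [hS, ← Nat.even_iff]
    exact piCount_setOf _ N
  simp only [hcount]
  exact ⟨liminf_eq_of_eventuallyLE_of_tendsto_comp tendsto_const_nhds
      ((eventually_ne_atTop 0).mono fun _ => one_div_succ_le_evenLengthCount_div hk)
      (tendsto_pow_two_mul_add_atTop hk 1) (tendsto_evenLengthCount_div_pow_odd hk),
    limsup_eq_of_eventuallyLE_of_tendsto_comp (tendsto_mul_add_one_div_mul_natCast _ _)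
      (Eventually.of_forall (evenLengthCount_div_le hk))
      (tendsto_pow_two_mul_add_atTop hk 0) (tendsto_evenLengthCount_div_pow_even hk)⟩
end

section
/- Let h : ℕ → {0,1} be defined by h(n) = 1 if n ≥ 1 and the most significant digit of the base-3 expansion of n equals 1, and h(n) = 0 otherwise (in particular h(0) = 0), and let s(n) = ∑_{j<n} h(j). Then limsup_{n→∞} s(n)/n = 3/4. -/
/-!
An integer `j ≥ 1` has leading ternary digit `1` exactly when `3 ^ k ≤ j < 2 * 3 ^ k` for some
`k`. So `s` grows with slope `1` on `[3 ^ k, 2 * 3 ^ k]` and is constant on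
`[2 * 3 ^ k, 3 ^ (k + 1)]`, which gives `2 s(3 ^ k) + 1 = 3 ^ k` and
`2 s(2 * 3 ^ k) + 1 = 3 ^ (k + 1)`. The ratio `s(n) / n` is largest at the right ends
`n = 2 * 3 ^ k` of the slope-one blocks, where it equals `3 / 4 - 3 ^ (-k) / 4`; hence
`s(n) / n ≤ 3 / 4` always, with equality in the limit along `2 * 3 ^ k`.
-/

open Filter Topology

theorem Filter.limsup_eq_of_eventually_le_of_tendsto_comp {α β γ : Type*}
    [ConditionallyCompleteLinearOrder α] [TopologicalSpace α] [ClosedIicTopology α]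
    {f : Filter β} {g : Filter γ} [NeBot g] {u : β → α} {φ : γ → β} {a : α}
    (hφ : Tendsto φ g f) (hle : ∀ᶠ x in f, u x ≤ a) (hlim : Tendsto (u ∘ φ) g (𝓝 a)) :
    limsup u f = a := by
  have le_of_bound : ∀ b, (∀ᶠ x in f, u x ≤ b) → a ≤ b := fun b hb =>
    le_of_tendsto hlim (hφ.eventually hb)
  exact le_antisymm (limsup_le_of_le ⟨a, le_of_bound⟩ hle)
    (le_limsup_of_le (isBoundedUnder_of_eventually_le hle) le_of_bound)

theorem Nat.getLast?_digits_of_mul_pow_le_of_lt {b d k n : ℕ} (hd : 0 < d) (hdb : d < b)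
    (hlo : d * b ^ k ≤ n) (hhi : n < (d + 1) * b ^ k) :
    (Nat.digits b n).getLast? = some d := by
  induction k generalizing n with
  | zero =>
    obtain rfl : n = d := by simp only [pow_zero, mul_one] at hlo hhi; omega
    simp [Nat.digits_of_lt b n hd.ne' hdb]
  | succ k ih =>
    have hb : 0 < b := hd.trans hdb
    have hn : 0 < n := lt_of_lt_of_le (by positivity) hlo
    have hlo' : d * b ^ k ≤ n / b :=
      (Nat.le_div_iff_mul_le hb).2 (by rw [pow_succ, ← mul_assoc] at hlo; exact hlo)
    have hhi' : n / b < (d + 1) * b ^ k :=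
      (Nat.div_lt_iff_lt_mul hb).2 (by rw [pow_succ, ← mul_assoc] at hhi; exact hhi)
    rw [Nat.digits_def' (by omega) hn, List.getLast?_cons, ih hlo' hhi']
    rfl

def ternaryLeadingOneCount (n : ℕ) : ℕ :=
  ∑ j ∈ Finset.range n, if (Nat.digits 3 j).getLast? = some 1 then 1 else 0

namespace ternaryLeadingOneCount

local notation "S" => ternaryLeadingOneCount

theorem eq_add_sub_of_three_pow_le {k a b : ℕ} (ha : 3 ^ k ≤ a) (hab : a ≤ b)
    (hb : b ≤ 2 * 3 ^ k) : S b = S a + (b - a) := by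
  rw [ternaryLeadingOneCount, ternaryLeadingOneCount, ← Finset.sum_range_add_sum_Ico _ hab]
  congr 1
  rw [Finset.sum_congr rfl (g := fun _ => 1), Finset.sum_const, Nat.card_Ico, smul_eq_mul, mul_one]
  intro j hj
  rw [Finset.mem_Ico] at hj
  rw [if_pos (Nat.getLast?_digits_of_mul_pow_le_of_lt (k := k) one_pos (by norm_num)
    (by omega) (by omega))]

theorem eq_of_two_mul_three_pow_le {k a b : ℕ} (ha : 2 * 3 ^ k ≤ a) (hab : a ≤ b)
    (hb : b ≤ 3 ^ (k + 1)) : S b = S a := by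
  rw [ternaryLeadingOneCount, ternaryLeadingOneCount, ← Finset.sum_range_add_sum_Ico _ hab,
    add_eq_left]
  refine Finset.sum_eq_zero fun j hj => ?_
  rw [Finset.mem_Ico] at hj
  rw [Nat.getLast?_digits_of_mul_pow_le_of_lt (d := 2) (k := k) two_pos (by norm_num)
    (by omega) (by rw [pow_succ] at hb; omega)]
  rfl

theorem two_mul_three_pow_add_one (k : ℕ) : 2 * S (3 ^ k) + 1 = 3 ^ k := by
  induction k with
  | zero => simp [ternaryLeadingOneCount]
  | succ k ih =>
    rw [eq_of_two_mul_three_pow_le (k := k) le_rfl (by rw [pow_succ]; omega) le_rfl,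
      eq_add_sub_of_three_pow_le (k := k) le_rfl (by omega) le_rfl, pow_succ]
    omega

theorem two_mul_two_mul_three_pow_add_one (k : ℕ) : 2 * S (2 * 3 ^ k) + 1 = 3 ^ (k + 1) := by
  rw [eq_add_sub_of_three_pow_le (k := k) le_rfl (by omega) le_rfl, pow_succ]
  have := two_mul_three_pow_add_one k
  omega

theorem four_mul_le (n : ℕ) : 4 * S n ≤ 3 * n := by
  rcases Nat.eq_zero_or_pos n with rfl | hn
  · simp [ternaryLeadingOneCount]
  set k := Nat.log 3 n
  have hkn : 3 ^ k ≤ n := Nat.pow_log_le_self 3 hn.ne'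
  have hnk : n < 3 ^ (k + 1) := Nat.lt_pow_succ_log_self (by norm_num) n
  have h3k : 3 ^ (k + 1) = 3 * 3 ^ k := by ring
  have hS := two_mul_three_pow_add_one k
  have hS2 := two_mul_two_mul_three_pow_add_one k
  rcases le_or_gt n (2 * 3 ^ k) with hn2 | hn2
  · have := eq_add_sub_of_three_pow_le le_rfl hkn hn2
    omega
  · have := eq_of_two_mul_three_pow_le le_rfl hn2.le hnk.le
    omega

theorem div_two_mul_three_pow (k : ℕ) :
    (S (2 * 3 ^ k) : ℝ) / (2 * 3 ^ k : ℕ) = 3 / 4 - (1 / 4) * (1 / 3 : ℝ) ^ k := by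
  have h : 2 * (S (2 * 3 ^ k) : ℝ) + 1 = 3 ^ (k + 1) := by
    exact_mod_cast two_mul_two_mul_three_pow_add_one k
  have hpow : (1 / 3 : ℝ) ^ k * 3 ^ k = 1 := by rw [← mul_pow]; norm_num
  rw [div_eq_iff (by positivity)]
  push_cast
  linear_combination h / 2 + hpow / 2

theorem tendsto_div_two_mul_three_pow :
    Tendsto (fun k : ℕ => (S (2 * 3 ^ k) : ℝ) / (2 * 3 ^ k : ℕ)) atTop (𝓝 (3 / 4)) := by
  simp_rw [div_two_mul_three_pow]
  have hpow : Tendsto (fun k : ℕ => (1 / 3 : ℝ) ^ k) atTop (𝓝 0) :=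
    tendsto_pow_atTop_nhds_zero_of_lt_one (by norm_num) (by norm_num)
  simpa using tendsto_const_nhds.sub (hpow.const_mul (1 / 4 : ℝ))

end ternaryLeadingOneCount

open ternaryLeadingOneCount in
theorem limsup_leading_ternary_digit_one
    (h : ℕ → ℕ)
    (hh : ∀ n : ℕ, h n = if (Nat.digits 3 n).getLast? = some 1 then 1 else 0)
    (s : ℕ → ℕ) (hs : ∀ n, s n = ∑ j ∈ Finset.range n, h j) :
    Filter.atTop.limsup (fun n : ℕ => (s n : ℝ) / n) = 3 / 4 := by
  obtain rfl : s = ternaryLeadingOneCount := funext fun n => by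
    simp only [hs, hh, ternaryLeadingOneCount]
  have hφ : Tendsto (fun k : ℕ => 2 * 3 ^ k) atTop atTop :=
    tendsto_atTop_mono (fun k => Nat.le_mul_of_pos_left _ two_pos)
      (tendsto_pow_atTop_atTop_of_one_lt (by norm_num))
  refine limsup_eq_of_eventually_le_of_tendsto_comp hφ (Eventually.of_forall fun n => ?_)
    tendsto_div_two_mul_three_pow
  rcases Nat.eq_zero_or_pos n with rfl | hn
  · norm_num
  have h4 : (4 * ternaryLeadingOneCount n : ℝ) ≤ 3 * n := by exact_mod_cast four_mul_le n
  rw [div_le_iff₀ (by exact_mod_cast hn)]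
  linarith
end

section
/- Let k ≥ 2 be a natural number and let A, B, C be integers with 1 ≤ A ≤ B < C. Let U₀ be the set of natural numbers whose base-k expansion has even length, U₁ the set of natural numbers whose base-k expansion has odd length, T₀ = {n ∈ ℕ : n mod C < A}, T₁ = {n ∈ ℕ : n mod C < B}, and let S = (U₀ ∩ T₀) ∪ (U₁ ∩ T₁). Then the lower density of S equals (kA + B)/((k+1)C) and the upper density of S equals (kB + A)/((k+1)C). -/
/-!
Numbers in `[k^L, k^(L+1))` have `L + 1` digits, so on that block `S` is the residue set
`n % C < w (L + 1)`, where `w` alternates between `A` (even lengths) and `B` (odd lengths), and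
`S` fills each block with density `w (L + 1) / C` up to an error `O(C)`. Summing over blocks,
`(k + 1) C π_S(k^L) = (k w L + w (L + 1)) k^L + O(L)`, and between consecutive powers `π_S` grows
with slope `w (L + 1) / C`. Hence `π_S(N) / N` is within `O(log N / N)` of a piecewise model
ratio, which always lies between `(kA + B) / ((k + 1) C)` and `(kB + A) / ((k + 1) C)` and equals
the first at even powers of `k` and the second at odd ones.
-/

open Filter

open Topology

theorem Nat.count_mod_lt_eq {C w : ℕ} (hw : w ≤ C) (M : ℕ) :
    Nat.count (· % C < w) M = w * (M / C) + min (M % C) w := by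
  induction M with
  | zero => simp
  | succ M ih =>
    rcases Nat.eq_zero_or_pos C with rfl | hC
    · obtain rfl : w = 0 := Nat.le_zero.mp hw
      simp
    rw [Nat.count_succ, ih]
    have hM := Nat.div_add_mod M C
    have hr := Nat.mod_lt M hC
    rcases (Nat.succ_le_of_lt hr).lt_or_eq with hlt | heq
    · obtain ⟨hq, hr'⟩ := (Nat.div_mod_unique hC).2 (⟨by omega, hlt⟩ :
        M % C + 1 + C * (M / C) = M + 1 ∧ M % C + 1 < C)
      rw [hq, hr']
      split_ifs <;> omega
    · obtain ⟨hq, hr'⟩ := (Nat.div_mod_unique hC).2 (⟨by rw [Nat.mul_add]; omega, hC⟩ :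
        0 + C * (M / C + 1) = M + 1 ∧ 0 < C)
      rw [hq, hr']
      split_ifs <;> simp [Nat.mul_add] <;> omega

theorem Nat.count_mod_lt_bounds {C w : ℕ} (hw : w ≤ C) (M : ℕ) :
    w * M ≤ C * Nat.count (· % C < w) M ∧ C * Nat.count (· % C < w) M ≤ w * M + w * C := by
  rcases Nat.eq_zero_or_pos C with rfl | hC
  · obtain rfl : w = 0 := Nat.le_zero.mp hw
    simp
  rw [Nat.count_mod_lt_eq hw]
  have hr := Nat.mod_lt M hC
  have hM := Nat.div_add_mod M C
  set q := M / C
  set r := M % C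
  rw [← hM]
  rcases le_total r w with h | h
  · rw [min_eq_left h]
    constructor <;> nlinarith
  · rw [min_eq_right h]
    constructor <;> nlinarith

theorem Nat.count_add_count_eq_of_agree {p q : ℕ → Prop} [DecidablePred p] [DecidablePred q]
    {a b : ℕ} (hab : a ≤ b) (h : ∀ n, a ≤ n → n < b → (p n ↔ q n)) :
    Nat.count p b + Nat.count q a = Nat.count p a + Nat.count q b := by
  obtain ⟨j, rfl⟩ := Nat.exists_eq_add_of_le hab
  have hshift : Nat.count (fun i ↦ p (a + i)) j = Nat.count (fun i ↦ q (a + i)) j :=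
    le_antisymm (Nat.count_mono_left fun i hi ↦ (h _ (by omega) (by omega)).1)
      (Nat.count_mono_left fun i hi ↦ (h _ (by omega) (by omega)).2)
  rw [Nat.count_add, Nat.count_add, hshift]
  ring

theorem liminf_eq_of_tendsto_sub {ι : Type*} {F : Filter ι} {f g : ι → ℝ} {l : ℝ}
    (hfg : Tendsto (fun i ↦ f i - g i) F (𝓝 0)) (hg : ∀ᶠ i in F, l ≤ g i)
    (hgl : ∃ᶠ i in F, g i = l) : F.liminf f = l := by
  have hclose (δ : ℝ) (hδ : 0 < δ) : ∀ᶠ i in F, g i - δ < f i ∧ f i < g i + δ :=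
    (Metric.tendsto_nhds.1 hfg δ hδ).mono fun i hi ↦ by
      rw [Real.dist_eq, sub_zero, abs_lt] at hi
      constructor <;> linarith
  have hlow (δ : ℝ) (hδ : 0 < δ) : ∀ᶠ i in F, l - δ ≤ f i :=
    ((hclose δ hδ).and hg).mono fun i ⟨hi, hgi⟩ ↦ by linarith [hi.1]
  have hup (δ : ℝ) (hδ : 0 < δ) : ∃ᶠ i in F, f i ≤ l + δ :=
    (hgl.and_eventually (hclose δ hδ)).mono fun i ⟨hgi, hi⟩ ↦ by linarith [hi.2]
  refine le_antisymm (le_of_forall_pos_le_add fun δ hδ ↦ ?_) (le_of_forall_sub_le fun δ hδ ↦ ?_)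
  · exact liminf_le_of_frequently_le (hup δ hδ) (isBoundedUnder_of_eventually_ge (hlow δ hδ))
  · exact le_liminf_of_le (IsCoboundedUnder.of_frequently_le (hup δ hδ)) (hlow δ hδ)

theorem limsup_eq_of_tendsto_sub {ι : Type*} {F : Filter ι} {f g : ι → ℝ} {u : ℝ}
    (hfg : Tendsto (fun i ↦ f i - g i) F (𝓝 0)) (hg : ∀ᶠ i in F, g i ≤ u)
    (hgu : ∃ᶠ i in F, g i = u) : F.limsup f = u := by
  have hclose (δ : ℝ) (hδ : 0 < δ) : ∀ᶠ i in F, g i - δ < f i ∧ f i < g i + δ :=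
    (Metric.tendsto_nhds.1 hfg δ hδ).mono fun i hi ↦ by
      rw [Real.dist_eq, sub_zero, abs_lt] at hi
      constructor <;> linarith
  have hup (δ : ℝ) (hδ : 0 < δ) : ∀ᶠ i in F, f i ≤ u + δ :=
    ((hclose δ hδ).and hg).mono fun i ⟨hi, hgi⟩ ↦ by linarith [hi.2]
  have hlow (δ : ℝ) (hδ : 0 < δ) : ∃ᶠ i in F, u - δ ≤ f i :=
    (hgu.and_eventually (hclose δ hδ)).mono fun i ⟨hgi, hi⟩ ↦ by linarith [hi.1]
  refine le_antisymm (le_of_forall_pos_le_add fun δ hδ ↦ ?_) (le_of_forall_sub_le fun δ hδ ↦ ?_)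
  · exact limsup_le_of_le (IsCoboundedUnder.of_frequently_ge (hlow δ hδ)) (hup δ hδ)
  · exact le_limsup_of_frequently_le (hlow δ hδ) (isBoundedUnder_of_eventually_le (hup δ hδ))

theorem piCount_le (S : Set ℕ) (N : ℕ) : piCount S N ≤ N := by
  classical
  rw [piCount_eq_count]
  exact Nat.count_le _

def parityWeight (a b L : ℕ) : ℕ := if L % 2 = 0 then a else b

def digitParitySet (k C a b : ℕ) : Set ℕ :=
  {n | n % C < parityWeight a b (Nat.digits k n).length}

theorem parityWeight_le {a b C : ℕ} (ha : a ≤ C) (hb : b ≤ C) (L : ℕ) :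
    parityWeight a b L ≤ C := by
  unfold parityWeight
  split_ifs <;> assumption

theorem parityWeight_add_two (a b L : ℕ) : parityWeight a b (L + 2) = parityWeight a b L := by
  simp [parityWeight, Nat.add_mod_right]

section DigitParitySet

variable {k C a b : ℕ}

theorem mem_digitParitySet_iff_of_mem_Ico (hk : 1 < k) {L n : ℕ} (h₁ : k ^ L ≤ n)
    (h₂ : n < k ^ (L + 1)) : n ∈ digitParitySet k C a b ↔ n % C < parityWeight a b (L + 1) := by
  have hn : n ≠ 0 := Nat.one_le_iff_ne_zero.mp ((Nat.one_le_pow _ _ (by omega)).trans h₁)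
  rw [digitParitySet, Set.mem_ofPred_eq, Nat.length_digits k n hk hn,
    Nat.log_eq_of_pow_le_of_lt_pow h₁ h₂]

theorem piCount_add_count_eq (hk : 1 < k) {L N : ℕ} (h₁ : k ^ L ≤ N) (h₂ : N ≤ k ^ (L + 1)) :
    piCount (digitParitySet k C a b) N + Nat.count (· % C < parityWeight a b (L + 1)) (k ^ L) =
      piCount (digitParitySet k C a b) (k ^ L) +
        Nat.count (· % C < parityWeight a b (L + 1)) N := by
  classical
  simp only [piCount_eq_count]
  exact Nat.count_add_count_eq_of_agree h₁ fun n hn₁ hn₂ ↦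
    mem_digitParitySet_iff_of_mem_Ico hk hn₁ (hn₂.trans_le h₂)

variable (k C a b)

/-- `blockTerm k a b L N / ((k + 1) * C)` is the model for `piCount (digitParitySet k C a b) N`
on the block `k ^ L ≤ N ≤ k ^ (L + 1)`. -/
def blockTerm (L N : ℕ) : ℝ :=
  (k * parityWeight a b L + parityWeight a b (L + 1)) * k ^ L +
    (k + 1) * parityWeight a b (L + 1) * ((N : ℝ) - k ^ L)

noncomputable def countError (L N : ℕ) : ℝ :=
  (k + 1) * C * piCount (digitParitySet k C a b) N - blockTerm k a b L N

variable {k C a b}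

theorem blockTerm_pow (L : ℕ) :
    blockTerm k a b L (k ^ L) =
      (k * parityWeight a b L + parityWeight a b (L + 1)) * (k : ℝ) ^ L := by
  simp [blockTerm]

theorem blockTerm_succ_pow (L : ℕ) :
    blockTerm k a b (L + 1) (k ^ (L + 1)) = blockTerm k a b L (k ^ (L + 1)) := by
  simp only [blockTerm, parityWeight_add_two]
  push_cast
  ring

theorem blockTerm_bounds (hab : a ≤ b) {L N : ℕ} (h₁ : k ^ L ≤ N) (h₂ : N ≤ k ^ (L + 1)) :
    (k * a + b) * (N : ℝ) ≤ blockTerm k a b L N ∧ blockTerm k a b L N ≤ (k * b + a) * (N : ℝ) := by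
  have h₁' : (k : ℝ) ^ L ≤ N := by exact_mod_cast h₁
  have h₂' : (N : ℝ) ≤ k * k ^ L := by rw [← pow_succ']; exact_mod_cast h₂
  have hab' : (0 : ℝ) ≤ b - a := by rw [sub_nonneg]; exact_mod_cast hab
  have hk : (0 : ℝ) ≤ k := by positivity
  have hlow := mul_nonneg hk (mul_nonneg hab' (sub_nonneg.2 h₁'))
  have hupp := mul_nonneg hab' (sub_nonneg.2 h₂')
  unfold blockTerm parityWeight
  rcases Nat.mod_two_eq_zero_or_one L with hL | hL
  · simp only [hL, Nat.succ_mod_two_eq_one_iff.2 hL, one_ne_zero, ↓reduceIte]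
    constructor <;> nlinarith
  · simp only [hL, Nat.succ_mod_two_eq_zero_iff.2 hL, one_ne_zero, ↓reduceIte]
    constructor <;> nlinarith

theorem abs_countError_sub_le (hk : 1 < k) (ha : a ≤ C) (hb : b ≤ C) {L N : ℕ}
    (h₁ : k ^ L ≤ N) (h₂ : N ≤ k ^ (L + 1)) :
    |countError k C a b L N - countError k C a b L (k ^ L)| ≤ (k + 1) * C ^ 2 := by
  set w := parityWeight a b (L + 1)
  have hw : w ≤ C := parityWeight_le ha hb _
  have hsplit : (piCount (digitParitySet k C a b) N : ℝ) + Nat.count (· % C < w) (k ^ L) =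
      piCount (digitParitySet k C a b) (k ^ L) + Nat.count (· % C < w) N := by
    exact_mod_cast piCount_add_count_eq hk h₁ h₂
  have hN := Nat.count_mod_lt_bounds hw N
  have hL := Nat.count_mod_lt_bounds hw (k ^ L)
  have hN₁ : (w : ℝ) * N ≤ C * Nat.count (· % C < w) N := by exact_mod_cast hN.1
  have hN₂ : (C : ℝ) * Nat.count (· % C < w) N ≤ w * N + w * C := by exact_mod_cast hN.2
  have hL₁ : (w : ℝ) * k ^ L ≤ C * Nat.count (· % C < w) (k ^ L) := by exact_mod_cast hL.1
  have hL₂ : (C : ℝ) * Nat.count (· % C < w) (k ^ L) ≤ w * k ^ L + w * C := by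
    exact_mod_cast hL.2
  have hwC : (w : ℝ) * C ≤ C ^ 2 := by rw [sq]; gcongr
  have hdiff : countError k C a b L N - countError k C a b L (k ^ L) =
      (k + 1) * ((C * Nat.count (· % C < w) N - w * N) -
        (C * Nat.count (· % C < w) (k ^ L) - w * (k : ℝ) ^ L)) := by
    simp only [countError, blockTerm]
    push_cast
    linear_combination (k + 1) * (C : ℝ) * hsplit
  rw [hdiff, abs_mul, abs_of_nonneg (by positivity)]
  gcongr
  rw [abs_sub_le_iff]
  constructor <;> linarith

theorem countError_succ_pow (L : ℕ) :
    countError k C a b (L + 1) (k ^ (L + 1)) = countError k C a b L (k ^ (L + 1)) := by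
  rw [countError, countError, blockTerm_succ_pow]

theorem abs_countError_pow_le (hk : 1 < k) (ha : a ≤ C) (hb : b ≤ C) (L : ℕ) :
    |countError k C a b L (k ^ L)| ≤ (L + 1) * ((k + 1) * C ^ 2) := by
  induction L with
  | zero =>
    have hπ : (piCount (digitParitySet k C a b) 1 : ℝ) ≤ 1 := by
      exact_mod_cast piCount_le _ 1
    have hw₀ : (parityWeight a b 0 : ℝ) ≤ C := by exact_mod_cast parityWeight_le ha hb 0
    have hw₁ : (parityWeight a b 1 : ℝ) ≤ C := by exact_mod_cast parityWeight_le ha hb 1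
    have hC : (C : ℝ) ≤ C ^ 2 := by
      rcases Nat.eq_zero_or_pos C with h | h
      · simp [h]
      · exact_mod_cast Nat.le_self_pow two_ne_zero C
    rw [countError, blockTerm_pow, pow_zero, pow_zero, abs_le]
    push_cast
    have hk₀ : (0 : ℝ) ≤ k := Nat.cast_nonneg k
    constructor <;> nlinarith [mul_le_mul_of_nonneg_left hπ (by positivity : (0 : ℝ) ≤ (k + 1) * C),
      mul_le_mul_of_nonneg_left hC (by positivity : (0 : ℝ) ≤ k + 1),
      mul_le_mul_of_nonneg_left hw₀ hk₀,
      (by positivity : (0 : ℝ) ≤ (k + 1) * C * piCount (digitParitySet k C a b) 1)]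
  | succ L ih =>
    have hstep := abs_countError_sub_le hk ha hb (Nat.pow_le_pow_right (by omega) L.le_succ) le_rfl
    rw [countError_succ_pow]
    push_cast
    linarith [abs_sub_abs_le_abs_sub (countError k C a b L (k ^ (L + 1)))
      (countError k C a b L (k ^ L))]

theorem abs_countError_le (hk : 1 < k) (ha : a ≤ C) (hb : b ≤ C) {L N : ℕ}
    (h₁ : k ^ L ≤ N) (h₂ : N ≤ k ^ (L + 1)) :
    |countError k C a b L N| ≤ (L + 2) * ((k + 1) * C ^ 2) := by
  linarith [abs_countError_sub_le hk ha hb h₁ h₂, abs_countError_pow_le hk ha hb L,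
    abs_sub_abs_le_abs_sub (countError k C a b L N) (countError k C a b L (k ^ L))]

end DigitParitySet

noncomputable def modelDensity (k C a b N : ℕ) : ℝ :=
  blockTerm k a b (Nat.log k N) N / ((k + 1) * C * N)

section ModelDensity

variable {k C a b : ℕ}

theorem modelDensity_pow (hk : 1 < k) (L : ℕ) :
    modelDensity k C a b (k ^ L) =
      (k * parityWeight a b L + parityWeight a b (L + 1)) / ((k + 1) * C) := by
  rw [modelDensity, Nat.log_pow hk, blockTerm_pow, Nat.cast_pow]
  exact mul_div_mul_right _ _ (by positivity)

theorem modelDensity_bounds (hk : 1 < k) (hab : a ≤ b) {N : ℕ} (hN : N ≠ 0) :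
    (k * a + b) / ((k + 1) * C) ≤ modelDensity k C a b N ∧
      modelDensity k C a b N ≤ (k * b + a) / ((k + 1) * C) := by
  obtain ⟨hlow, hupp⟩ := blockTerm_bounds (k := k) hab (Nat.pow_log_le_self k hN)
    (Nat.lt_pow_succ_log_self hk N).le
  have hN' : (N : ℝ) ≠ 0 := Nat.cast_ne_zero.2 hN
  rw [modelDensity, ← mul_div_mul_right _ _ hN', ← mul_div_mul_right (_ + _) _ hN']
  exact ⟨by gcongr, by gcongr⟩

theorem abs_piCount_div_sub_modelDensity_le (hk : 1 < k) (ha : a ≤ C) (hb : b ≤ C) (hC : 0 < C)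
    {N : ℕ} (hN : N ≠ 0) :
    |(piCount (digitParitySet k C a b) N : ℝ) / N - modelDensity k C a b N| ≤
      (Real.logb k N + 2) * C / N := by
  have herr := abs_countError_le (a := a) (b := b) hk ha hb (Nat.pow_log_le_self k hN)
    (Nat.lt_pow_succ_log_self hk N).le
  have hlog := Real.natLog_le_logb N k
  have hD : (0 : ℝ) < (k + 1) * C * N := by positivity
  have hdiff : (piCount (digitParitySet k C a b) N : ℝ) / N - modelDensity k C a b N =
      countError k C a b (Nat.log k N) N / ((k + 1) * C * N) := by
    rw [modelDensity, countError]
    field_simp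
  rw [hdiff, abs_div, abs_of_pos hD, div_le_div_iff₀ hD (by positivity)]
  calc |countError k C a b (Nat.log k N) N| * N
      ≤ (Nat.log k N + 2) * ((k + 1) * C ^ 2) * N := by gcongr
    _ ≤ (Real.logb k N + 2) * C * ((k + 1) * C * N) := by
      rw [show (Nat.log k N + 2) * ((k + 1) * (C : ℝ) ^ 2) * N =
        (Nat.log k N + 2) * C * ((k + 1) * C * N) by ring]
      gcongr

theorem tendsto_logb_add_two_mul_div_atTop (k C : ℕ) :
    Tendsto (fun N : ℕ ↦ (Real.logb k N + 2) * C / N) atTop (𝓝 0) := by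
  have hlog : Tendsto (fun x : ℝ ↦ Real.logb k x / x) atTop (𝓝 0) := by
    simpa using Real.tendsto_pow_logb_div_mul_add_atTop (b := k) 1 0 1 one_ne_zero
  have h := ((hlog.comp tendsto_natCast_atTop_atTop).const_mul (C : ℝ)).add
    (tendsto_const_div_atTop_nhds_zero_nat (2 * C : ℝ))
  rw [mul_zero, add_zero] at h
  refine h.congr fun N ↦ ?_
  simp only [Function.comp_apply]
  ring

theorem tendsto_piCount_div_sub_modelDensity (hk : 1 < k) (ha : a ≤ C) (hb : b ≤ C) (hC : 0 < C) :
    Tendsto (fun N : ℕ ↦ (piCount (digitParitySet k C a b) N : ℝ) / N - modelDensity k C a b N)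
      atTop (𝓝 0) :=
  squeeze_zero_norm' ((eventually_ne_atTop 0).mono fun _ hN ↦
    abs_piCount_div_sub_modelDensity_le hk ha hb hC hN) (tendsto_logb_add_two_mul_div_atTop k C)

end ModelDensity

theorem densities_of_constructed_set_general
    (k : ℕ) (hk : 2 ≤ k) (A B C : ℕ) (hAB : A ≤ B) (hBC : B < C)
    (U₀ U₁ T₀ T₁ S : Set ℕ)
    (hU₀ : U₀ = {n : ℕ | (Nat.digits k n).length % 2 = 0})
    (hU₁ : U₁ = {n : ℕ | (Nat.digits k n).length % 2 = 1})
    (hT₀ : T₀ = {n : ℕ | n % C < A})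
    (hT₁ : T₁ = {n : ℕ | n % C < B})
    (hS : S = (U₀ ∩ T₀) ∪ (U₁ ∩ T₁)) :
    Filter.atTop.liminf (fun N : ℕ => (piCount S N : ℝ) / N) =
      ((k : ℝ) * A + B) / (((k : ℝ) + 1) * C) ∧
    Filter.atTop.limsup (fun N : ℕ => (piCount S N : ℝ) / N) =
      ((k : ℝ) * B + A) / (((k : ℝ) + 1) * C) := by
  obtain rfl : S = digitParitySet k C A B := by
    ext n
    rcases Nat.mod_two_eq_zero_or_one (Nat.digits k n).length with h | h <;>
      simp [hS, hU₀, hU₁, hT₀, hT₁, digitParitySet, parityWeight, h]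
  have hfg := tendsto_piCount_div_sub_modelDensity hk (hAB.trans hBC.le) hBC.le (by omega)
  have hbounds := (eventually_ne_atTop 0).mono fun N hN ↦ modelDensity_bounds (C := C) hk hAB hN
  have hpow : Tendsto (k ^ ·) atTop atTop := tendsto_pow_atTop_atTop_of_one_lt hk
  refine ⟨liminf_eq_of_tendsto_sub hfg (hbounds.mono fun _ ↦ And.left) ?_,
    limsup_eq_of_tendsto_sub hfg (hbounds.mono fun _ ↦ And.right) ?_⟩
  · refine (hpow.comp (StrictMono.tendsto_atTop fun m n (h : m < n) ↦ by omega :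
      Tendsto (2 * ·) atTop atTop)).frequently (.of_forall fun m ↦ ?_)
    simp [modelDensity_pow hk, parityWeight]
  · refine (hpow.comp (StrictMono.tendsto_atTop fun m n (h : m < n) ↦ by omega :
      Tendsto (2 * · + 1) atTop atTop)).frequently (.of_forall fun m ↦ ?_)
    simp [modelDensity_pow hk, parityWeight, Nat.add_mod]

theorem densities_of_constructed_set
    (k : ℕ) (hk : 2 ≤ k) (A B C : ℕ) (hA : 1 ≤ A) (hAB : A ≤ B) (hBC : B < C)
    (U₀ U₁ T₀ T₁ S : Set ℕ)
    (hU₀ : U₀ = {n : ℕ | (Nat.digits k n).length % 2 = 0})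
    (hU₁ : U₁ = {n : ℕ | (Nat.digits k n).length % 2 = 1})
    (hT₀ : T₀ = {n : ℕ | n % C < A})
    (hT₁ : T₁ = {n : ℕ | n % C < B})
    (hS : S = (U₀ ∩ T₀) ∪ (U₁ ∩ T₁)) :
    Filter.atTop.liminf (fun N : ℕ => (piCount S N : ℝ) / N) =
      ((k : ℝ) * A + B) / (((k : ℝ) + 1) * C) ∧
    Filter.atTop.limsup (fun N : ℕ => (piCount S N : ℝ) / N) =
      ((k : ℝ) * B + A) / (((k : ℝ) + 1) * C) :=
  densities_of_constructed_set_general k hk A B C hAB hBC U₀ U₁ T₀ T₁ S hU₀ hU₁ hT₀ hT₁ hS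
end
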